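/- arXiv:2002.12903 — 6 statements merged into one kernel-verified Lean document; each statement's English description precedes it below -/
import Mathlib

section
/- Let (Aₙ, Bₙ) be a sequence of random variables with values in ℝ × ℝ^k such that (Aₙ, Bₙ) converges in distribution to (A, B) and Aₙ has the same distribution as A for every n. Then for any bounded measurable function f : ℝ × ℝ^k → ℝ such that b ↦ f(a, b) is continuous for every fixed a, we have E[f(Aₙ, Bₙ)] → E[f(A, B)]. -/
open MeasureTheory Filter BoundedContinuousFunction Set Topology
open scoped ProbabilityTheory

/-!
The laws `ν n` of `(Aₙ, Bₙ)` all have the same first marginal `μ`, so an error term that depends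
only on the first coordinate and is small in `L¹(μ)` is small for all `n` at once. On the ball
`‖b‖ ≤ R + 1` the sections `a ↦ f (a, ·)` form a bounded measurable map into the separable Banach
space `C(closedBall 0 (R + 1), ℝ)` (measurability only needs countably many evaluations), so they
can be approximated in `L¹(μ)` by a continuous map `G`. Composing `G` with the radial retraction
onto the ball and clipping at the bound `M` of `f` gives a bounded continuous `g` with
`|∫ f ∂ν - ∫ g ∂ν| ≤ δ + 2M ∫ θ_R ∂ν` for every `ν` with first marginal `μ`, where `θ_R` vanishes
on the ball of radius `R` and equals `1` outside that of radius `R + 1`. Weak convergence applied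
to `g` and to `θ_R`, with `R` chosen so that the tail `∫ θ_R ∂ν₀` is small, finishes the proof.
-/

theorem tendsto_of_forall_eventually_abs_sub_le {ι : Type*} {l : Filter ι} {u : ι → ℝ} {x : ℝ}
    (h : ∀ ε > 0, ∃ (v : ι → ℝ) (y : ℝ), Tendsto v l (𝓝 y) ∧ (∀ᶠ i in l, |u i - v i| ≤ ε) ∧
      |x - y| ≤ ε) :
    Tendsto u l (𝓝 x) := by
  refine Metric.tendsto_nhds.2 fun ε hε => ?_
  obtain ⟨v, y, hvy, huv, hxy⟩ := h (ε / 4) (by positivity)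
  filter_upwards [huv, Metric.tendsto_nhds.1 hvy (ε / 4) (by positivity)] with i hi hvi
  rw [Real.dist_eq] at hvi ⊢
  linarith [abs_sub_le (u i) (v i) x, abs_sub_le (v i) y x, abs_sub_comm x y]

theorem measurable_of_measurable_dist {X β : Type*} [MeasurableSpace X] [PseudoMetricSpace β]
    [SecondCountableTopology β] [MeasurableSpace β] [BorelSpace β] {F : X → β}
    (hF : ∀ y, Measurable fun x => dist (F x) y) : Measurable F := by
  refine measurable_of_isOpen fun U hU => ?_
  choose! r hr_pos hr using Metric.isOpen_iff.1 hU
  obtain ⟨T, -, hT, hTU⟩ := TopologicalSpace.isOpen_biUnion_countable U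
    (fun y => Metric.ball y (r y)) fun _ _ => Metric.isOpen_ball
  have hU_eq : U = ⋃ y ∈ T, Metric.ball y (r y) := by
    rw [hTU]
    exact Subset.antisymm (fun y hy => mem_biUnion hy (Metric.mem_ball_self (hr_pos y hy)))
      (iUnion₂_subset hr)
  rw [hU_eq, preimage_iUnion₂]
  exact .biUnion hT fun y _ => measurableSet_lt (hF y) measurable_const

theorem ContinuousMap.measurable_mk {X K β : Type*} [MeasurableSpace X] [MetricSpace K]
    [CompactSpace K] [MetricSpace β] [SecondCountableTopology β] [MeasurableSpace β]
    [BorelSpace β] [MeasurableSpace C(K, β)] [BorelSpace C(K, β)] {f : X → K → β}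
    (hf : ∀ y, Measurable fun x => f x y) (hc : ∀ x, Continuous (f x)) :
    Measurable fun x => (⟨f x, hc x⟩ : C(K, β)) := by
  obtain ⟨D, hD, hD_dense⟩ := TopologicalSpace.exists_countable_dense K
  have := hD.to_subtype
  refine measurable_of_measurable_dist fun h => ?_
  have hdist : (fun x => dist (⟨f x, hc x⟩ : C(K, β)) h) =
      fun x => ⨆ y : D, dist (f x y) (h y) := by
    ext x
    rw [ContinuousMap.dist_eq_iSup]
    exact (hD_dense.ciSup' ((hc x).dist h.continuous)).symm
  rw [hdist]
  exact Measurable.iSup fun y => (hf y).dist measurable_const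

section Cutoff

variable {E : Type*} [SeminormedAddCommGroup E]

noncomputable def tailCutoff (R : ℝ) : E →ᵇ ℝ :=
  .ofNormedAddCommGroup (fun b => min 1 (max (‖b‖ - R) 0)) (by fun_prop) 1 fun b => by
    rw [Real.norm_of_nonneg (le_min zero_le_one (le_max_right _ _))]
    exact min_le_left _ _

theorem tailCutoff_nonneg (R : ℝ) (b : E) : 0 ≤ tailCutoff R b :=
  le_min zero_le_one (le_max_right _ _)

theorem tailCutoff_eq_one {R : ℝ} {b : E} (hb : R + 1 ≤ ‖b‖) : tailCutoff R b = 1 :=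
  min_eq_left (le_max_of_le_left (by linarith))

theorem tailCutoff_eq_zero {R : ℝ} {b : E} (hb : ‖b‖ ≤ R) : tailCutoff R b = 0 := by
  simp [tailCutoff, hb]

theorem tendsto_integral_tailCutoff_atTop {X : Type*} [MeasurableSpace X] (ν : Measure X)
    [IsFiniteMeasure ν] {Y : X → E} (hY : AEStronglyMeasurable Y ν) :
    Tendsto (fun R => ∫ x, tailCutoff R (Y x) ∂ν) atTop (𝓝 0) := by
  simpa using tendsto_integral_filter_of_dominated_convergence (fun _ => 1)
    (.of_forall fun R => (tailCutoff R).continuous.comp_aestronglyMeasurable hY)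
    (.of_forall fun R => .of_forall fun x => by
      rw [Real.norm_of_nonneg (tailCutoff_nonneg R _)]; exact min_le_left _ _)
    (integrable_const 1) (.of_forall fun x => tendsto_const_nhds.congr'
      ((eventually_ge_atTop ‖Y x‖).mono fun R hR => (tailCutoff_eq_zero hR).symm))

end Cutoff

section Retraction

variable {E : Type*} [NormedAddCommGroup E] [NormedSpace ℝ E]

noncomputable def radialRetraction (R : ℝ) (b : E) : E := (R / max R ‖b‖) • b

theorem norm_radialRetraction_le {R : ℝ} (hR : 0 ≤ R) (b : E) : ‖radialRetraction R b‖ ≤ R := by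
  rcases eq_or_ne b 0 with rfl | hb
  · simpa [radialRetraction] using hR
  have hmax : 0 < max R ‖b‖ := lt_max_of_lt_right (norm_pos_iff.2 hb)
  rw [radialRetraction, norm_smul, Real.norm_of_nonneg (by positivity), div_mul_eq_mul_div,
    div_le_iff₀ hmax]
  exact mul_le_mul_of_nonneg_left (le_max_right _ _) hR

theorem radialRetraction_of_norm_le {R : ℝ} {b : E} (hb : ‖b‖ ≤ R) : radialRetraction R b = b := by
  rw [radialRetraction, max_eq_left hb]
  rcases ((norm_nonneg b).trans hb).eq_or_lt with rfl | hR
  · simp_all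
  · rw [div_self hR.ne', one_smul]

theorem continuous_radialRetraction {R : ℝ} (hR : 0 < R) :
    Continuous (radialRetraction (E := E) R) :=
  (continuous_const.div (continuous_const.max continuous_norm)
    fun _ => (lt_max_of_lt_left hR).ne').smul continuous_id

end Retraction

section Approximation

variable {α E : Type*} [PseudoMetricSpace α] [MeasurableSpace α] [BorelSpace α]
  [NormedAddCommGroup E] [NormedSpace ℝ E] [ProperSpace E]

theorem exists_boundedContinuous_abs_sub_le_on_closedBall (μ : Measure α) [IsFiniteMeasure μ]
    {f : α × E → ℝ} (hf : ∀ b, Measurable fun a => f (a, b))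
    (hfc : ∀ a, Continuous fun b => f (a, b)) {M : ℝ} (hM₀ : 0 ≤ M) (hM : ∀ p, |f p| ≤ M)
    {R δ : ℝ} (hR : 0 < R) (hδ : 0 < δ) :
    ∃ (g : α × E →ᵇ ℝ) (φ : α → ℝ), (∀ p, |g p| ≤ M) ∧ (∀ a, 0 ≤ φ a) ∧ Integrable φ μ ∧
      ∫ a, φ a ∂μ ≤ δ ∧ ∀ a b, ‖b‖ ≤ R → |f (a, b) - g (a, b)| ≤ φ a := by
  let K := Metric.closedBall (0 : E) R
  have : CompactSpace K := isCompact_iff_compactSpace.1 (isCompact_closedBall 0 R)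
  borelize C(K, ℝ)
  let F : α → C(K, ℝ) := fun a => ⟨fun x => f (a, x), (hfc a).comp continuous_subtype_val⟩
  have hF_meas : Measurable F := ContinuousMap.measurable_mk (f := fun a (x : K) => f (a, x))
    (fun x => hf x) _
  have hF_int : Integrable F μ := .of_bound hF_meas.aestronglyMeasurable M
    (.of_forall fun a => (ContinuousMap.norm_le _ hM₀).2 fun x => hM _)
  obtain ⟨G, hG, hG_int⟩ := hF_int.exists_boundedContinuous_integral_sub_le hδ
  let π : E → K := fun b => ⟨radialRetraction R b,
    mem_closedBall_zero_iff.2 (norm_radialRetraction_le hR.le b)⟩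
  have hπ : Continuous π := (continuous_radialRetraction hR).subtype_mk _
  have hMM : -M ≤ M := by linarith
  have hg : ∀ p : α × E, ‖(projIcc (-M) M hMM (G p.1 (π p.2)) : ℝ)‖ ≤ M := fun p =>
    abs_le.2 (projIcc _ _ _ _).2
  refine ⟨.ofNormedAddCommGroup _ (by fun_prop) M hg, fun a => ‖F a - G a‖, hg,
    fun a => norm_nonneg _, (hF_int.sub hG_int).norm, hG, fun a b hb => ?_⟩
  have hbK : b ∈ K := mem_closedBall_zero_iff.2 hb
  have hπb : π b = ⟨b, hbK⟩ := Subtype.ext (radialRetraction_of_norm_le hb)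
  calc |f (a, b) - projIcc (-M) M hMM (G a (π b))|
      = dist (projIcc (-M) M hMM (f (a, b))) (projIcc (-M) M hMM (G a ⟨b, hbK⟩)) := by
        rw [hπb, Subtype.dist_eq, projIcc_of_mem _ (abs_le.1 (hM _)), Real.dist_eq]
    _ ≤ dist (f (a, b)) (G a ⟨b, hbK⟩) := by
        simpa using (LipschitzWith.projIcc hMM).dist_le_mul _ _
    _ ≤ ‖F a - G a‖ := by
        rw [dist_eq_norm]; exact (F a - G a).norm_coe_le_norm ⟨b, hbK⟩

variable [MeasurableSpace E] [BorelSpace E]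

theorem exists_boundedContinuous_abs_integral_sub_le (μ : Measure α) [IsFiniteMeasure μ]
    {f : α × E → ℝ} (hf : Measurable f) (hfc : ∀ a, Continuous fun b => f (a, b)) {M : ℝ}
    (hM₀ : 0 ≤ M) (hM : ∀ p, |f p| ≤ M) {R δ : ℝ} (hR : 0 ≤ R) (hδ : 0 < δ) :
    ∃ g : α × E →ᵇ ℝ, ∀ ν : Measure (α × E), [IsFiniteMeasure ν] → ν.map Prod.fst = μ →
      |∫ p, f p ∂ν - ∫ p, g p ∂ν| ≤ δ + 2 * M * ∫ p, tailCutoff R p.2 ∂ν := by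
  obtain ⟨g, φ, hg, hφ₀, hφ_int, hφ, hfg⟩ := exists_boundedContinuous_abs_sub_le_on_closedBall μ
    (fun b => hf.comp (measurable_id.prodMk measurable_const)) hfc hM₀ hM
    (by linarith : 0 < R + 1) hδ
  have hfg_le : ∀ p : α × E, |f p - g p| ≤ φ p.1 + 2 * M * tailCutoff R p.2 := by
    rintro ⟨a, b⟩
    rcases le_or_gt ‖b‖ (R + 1) with hb | hb
    · exact (hfg a b hb).trans
        (le_add_of_nonneg_right (mul_nonneg (by linarith) (tailCutoff_nonneg R b)))
    · rw [tailCutoff_eq_one hb.le]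
      linarith [abs_sub (f (a, b)) (g (a, b)), hM (a, b), hg (a, b), hφ₀ a]
  refine ⟨g, fun ν _ hν => ?_⟩
  have hφν : Integrable (fun p : α × E => φ p.1) ν := (hν ▸ hφ_int).comp_measurable measurable_fst
  have hf_int : Integrable f ν := .of_bound hf.aestronglyMeasurable M (.of_forall hM)
  have hθ_int : Integrable (fun p : α × E => tailCutoff R p.2) ν :=
    ((tailCutoff R).integrable (ν.map Prod.snd)).comp_measurable measurable_snd
  calc |∫ p, f p ∂ν - ∫ p, g p ∂ν|
      = |∫ p, (f p - g p) ∂ν| := by rw [integral_sub hf_int (g.integrable ν)]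
    _ ≤ ∫ p, (φ p.1 + 2 * M * tailCutoff R p.2) ∂ν :=
        abs_integral_le_integral_abs.trans <| integral_mono_of_nonneg
          (.of_forall fun _ => abs_nonneg _) (hφν.add (hθ_int.const_mul _)) (.of_forall hfg_le)
    _ = ∫ a, φ a ∂μ + 2 * M * ∫ p, tailCutoff R p.2 ∂ν := by
        rw [integral_add hφν (hθ_int.const_mul _), integral_const_mul, ← hν,
          integral_map measurable_fst.aemeasurable (hν ▸ hφ_int.aestronglyMeasurable)]
    _ ≤ δ + 2 * M * ∫ p, tailCutoff R p.2 ∂ν := by linarith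

end Approximation

theorem tendsto_integral_of_tendsto_of_map_fst_eq {α E ι : Type*} [PseudoMetricSpace α]
    [MeasurableSpace α] [BorelSpace α] [NormedAddCommGroup E] [NormedSpace ℝ E] [ProperSpace E]
    [MeasurableSpace E] [BorelSpace E] {l : Filter ι} {ν : ι → Measure (α × E)}
    {ν₀ : Measure (α × E)} [∀ i, IsFiniteMeasure (ν i)] [IsFiniteMeasure ν₀]
    (hν : ∀ g : α × E →ᵇ ℝ, Tendsto (fun i => ∫ p, g p ∂ν i) l (𝓝 (∫ p, g p ∂ν₀)))
    (hfst : ∀ i, (ν i).map Prod.fst = ν₀.map Prod.fst) {f : α × E → ℝ} (hf : Measurable f)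
    (hf_bdd : ∃ M, ∀ p, |f p| ≤ M) (hfc : ∀ a, Continuous fun b => f (a, b)) :
    Tendsto (fun i => ∫ p, f p ∂ν i) l (𝓝 (∫ p, f p ∂ν₀)) := by
  obtain ⟨M, hM⟩ := hf_bdd
  refine tendsto_of_forall_eventually_abs_sub_le fun ε hε => ?_
  have hM₀ : 0 ≤ max M 0 := le_max_right _ _
  have hM' : ∀ p, |f p| ≤ max M 0 := fun p => (hM p).trans (le_max_left _ _)
  obtain ⟨R, hR, hR₀⟩ : ∃ R, 2 * max M 0 * ∫ p, tailCutoff R p.2 ∂ν₀ < ε / 2 ∧ 0 ≤ R :=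
    (((tendsto_integral_tailCutoff_atTop ν₀ measurable_snd.aestronglyMeasurable).const_mul
      (2 * max M 0)).eventually (gt_mem_nhds (by simpa using half_pos hε))).and
      (eventually_ge_atTop 0) |>.exists
  have hRν : ∀ᶠ i in l, 2 * max M 0 * ∫ p, tailCutoff R p.2 ∂ν i < ε / 2 :=
    ((hν ((tailCutoff R).compContinuous ⟨Prod.snd, continuous_snd⟩)).const_mul _
      ).eventually_lt_const hR
  obtain ⟨g, hg⟩ := exists_boundedContinuous_abs_integral_sub_le (ν₀.map Prod.fst) hf hfc hM₀ hM'
    hR₀ (half_pos hε)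
  exact ⟨_, _, hν g, hRν.mono fun i hi => (hg (ν i) (hfst i)).trans (by linarith),
    (hg ν₀ rfl).trans (by linarith)⟩

/-- If `(Aₙ, Bₙ)` converges in distribution to `(A, B)` in `ℝ × ℝ^k` and `Aₙ` has the
same law as `A` for every `n`, then for any bounded measurable `f : ℝ × ℝ^k → ℝ` that
is continuous in its second argument for each fixed first argument,
`E[f(Aₙ, Bₙ)] → E[f(A, B)]`. -/
theorem stmt_2 {k : ℕ} {Ω : Type*} [MeasureSpace Ω] [IsProbabilityMeasure (ℙ : Measure Ω)]
    (A : ℕ → Ω → ℝ) (B : ℕ → Ω → EuclideanSpace ℝ (Fin k))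
    (A₀ : Ω → ℝ) (B₀ : Ω → EuclideanSpace ℝ (Fin k))
    (hAmeas : ∀ n, Measurable (A n)) (hBmeas : ∀ n, Measurable (B n))
    (hA₀meas : Measurable A₀) (hB₀meas : Measurable B₀)
    (hconv : ∀ g : (ℝ × EuclideanSpace ℝ (Fin k)) →ᵇ ℝ,
      Tendsto (fun n => ∫ ω, g (A n ω, B n ω)) atTop (nhds (∫ ω, g (A₀ ω, B₀ ω))))
    (hAlaw : ∀ n, Measure.map (A n) ℙ = Measure.map A₀ ℙ)
    (f : ℝ × EuclideanSpace ℝ (Fin k) → ℝ)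
    (hfmeas : Measurable f)
    (hfbdd : ∃ M : ℝ, ∀ z, |f z| ≤ M)
    (hfcont : ∀ a, Continuous fun b => f (a, b)) :
    Tendsto (fun n => ∫ ω, f (A n ω, B n ω)) atTop (nhds (∫ ω, f (A₀ ω, B₀ ω))) := by
  have hX : ∀ n, Measurable fun ω => (A n ω, B n ω) := fun n => (hAmeas n).prodMk (hBmeas n)
  have hX₀ : Measurable fun ω => (A₀ ω, B₀ ω) := hA₀meas.prodMk hB₀meas
  have hlaw : ∀ {X : Ω → ℝ × EuclideanSpace ℝ (Fin k)} (hX : Measurable X) {g}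
      (hg : Measurable g), ∫ p, g p ∂(Measure.map X ℙ) = ∫ ω, (g (X ω) : ℝ) := fun hX _ hg =>
    integral_map hX.aemeasurable hg.aestronglyMeasurable
  have hfst : ∀ n, (Measure.map (fun ω => (A n ω, B n ω)) ℙ).map Prod.fst =
      (Measure.map (fun ω => (A₀ ω, B₀ ω)) ℙ).map Prod.fst := fun n => by
    rw [Measure.map_map measurable_fst (hX n), Measure.map_map measurable_fst hX₀]
    exact hAlaw n
  simpa only [hlaw (hX _) hfmeas, hlaw hX₀ hfmeas] using
    tendsto_integral_of_tendsto_of_map_fst_eq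
      (fun g => by
        simpa only [hlaw (hX _) g.continuous.measurable, hlaw hX₀ g.continuous.measurable]
          using hconv g)
      hfst hfmeas hfbdd hfcont
end

section
/- Let (Aₙ, Bₙ) converge in distribution to (A, B) in ℝ × ℝ^k with Aₙ equal in distribution to A for all n. Then for any function φ : ℝ × ℝ^k → ℝ^{k'} (possibly unbounded) that is continuous in all but the first coordinate, φ(Aₙ, Bₙ) converges in distribution to φ(A, B). -/
/-!
Write `ν` for the common first marginal of the `μ i` and of `μ₀`. For a product `f(x) ψ(y)` with
`f` bounded measurable and `ψ` bounded continuous, approximate `f` in `L¹(ν)` by a bounded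
continuous `f'`: since all the measures share the first marginal `ν`, replacing `f` by `f'` moves
every integral by at most `‖ψ‖ ∫ |f - f'| dν`, uniformly in `i`.

A bounded `h`, continuous in `y`, is reduced to finite sums of such products. Take a compact `K`
carrying almost all of the second marginal of `μ₀` and a partition of unity `(ρ_c)` on `K`
subordinate to `δ`-balls around points `c ∈ K`. Then `|h(x, y) - ∑ h(x, c) ρ_c(y)|` is at most
the modulus of continuity of `h(x, ·)` at scale `δ` near `K` plus `sup |h| · (1 - ∑ ρ_c(y))`. The
first term has small `ν`-integral for small `δ` by dominated convergence; the second is a bounded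
continuous function of `y` vanishing on `K`, so its integrals converge to a small limit.
-/

open MeasureTheory Filter Topology Metric Set BoundedContinuousFunction
open scoped ProbabilityTheory

theorem tendsto_of_forall_eventually_dist_lt {ι α : Type*} [PseudoMetricSpace α] {l : Filter ι}
    {x : ι → α} {x₀ : α}
    (h : ∀ ε > 0, ∃ (y : ι → α) (y₀ : α), Tendsto y l (𝓝 y₀) ∧
      (∀ᶠ i in l, dist (x i) (y i) < ε) ∧ dist x₀ y₀ < ε) :
    Tendsto x l (𝓝 x₀) := by
  refine Metric.tendsto_nhds.2 fun ε hε => ?_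
  obtain ⟨y, y₀, hy, hxy, hxy₀⟩ := h (ε / 3) (by positivity)
  filter_upwards [hxy, Metric.tendsto_nhds.1 hy _ (by positivity : 0 < ε / 3)] with i hxyi hyi
  calc dist (x i) x₀ ≤ dist (x i) (y i) + dist (y i) y₀ + dist y₀ x₀ := dist_triangle4 _ _ _ _
    _ < ε / 3 + ε / 3 + ε / 3 := by rw [dist_comm y₀]; gcongr
    _ = ε := by ring

theorem Measurable.integrable_of_abs_le {α : Type*} [MeasurableSpace α] {μ : Measure α}
    [IsFiniteMeasure μ] {f : α → ℝ} (hf : Measurable f) {C : ℝ} (hC : ∀ x, |f x| ≤ C) :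
    Integrable f μ :=
  .of_bound hf.aestronglyMeasurable C (ae_of_all _ hC)

theorem exists_isCompact_measureReal_compl_lt {Y : Type*} [TopologicalSpace Y]
    [SecondCountableTopology Y] [TopologicalSpace.IsCompletelyPseudoMetrizableSpace Y]
    [MeasurableSpace Y] [OpensMeasurableSpace Y] (ν : Measure Y) [IsFiniteMeasure ν] {ε : ℝ} (hε : 0 < ε) :
    ∃ K, IsCompact K ∧ ν.real Kᶜ < ε := by
  obtain ⟨K, hK, hKε⟩ :=
    exists_isCompact_closure_measure_compl_lt ν (ENNReal.ofReal ε) (by simpa using hε)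
  exact ⟨closure K, hK, ENNReal.toReal_lt_of_lt_ofReal <|
    (measure_mono (compl_subset_compl.2 subset_closure)).trans_lt hKε⟩

theorem measurable_iSup_subtype_of_continuous {X Z : Type*} [MeasurableSpace X]
    [TopologicalSpace Z] [SecondCountableTopology Z] (S : Set Z) {F : X → Z → ℝ}
    (hFm : ∀ z, Measurable fun x => F x z) (hFc : ∀ x, Continuous (F x)) :
    Measurable fun x => ⨆ z : S, F x z := by
  obtain ⟨D, hDc, hD⟩ := TopologicalSpace.exists_countable_dense S
  have : Countable D := hDc.to_subtype
  have hsup : ∀ x, ⨆ z : S, F x z = ⨆ z : D, F x z := fun x =>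
    (hD.ciSup' ((hFc x).comp continuous_subtype_val)).symm
  simp_rw [hsup]
  exact Measurable.iSup fun z => hFm _

section ModulusNear

variable {X Y : Type*} [PseudoMetricSpace Y]

/-- Only the second point of a pair is required to lie in `K`, so that points of a `δ`-ball
around a centre in `K` can be compared with the centre. -/
noncomputable def modulusNear (K : Set Y) (δ : ℝ) (f : Y → ℝ) : ℝ :=
  ⨆ q : {q : Y × Y | q.2 ∈ K ∧ dist q.1 q.2 < δ}, |f q.1.1 - f q.1.2|

theorem modulusNear_nonneg (K : Set Y) (δ : ℝ) (f : Y → ℝ) : 0 ≤ modulusNear K δ f :=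
  Real.iSup_nonneg fun _ => abs_nonneg _

theorem modulusNear_le {K : Set Y} {δ c : ℝ} {f : Y → ℝ} (hc : 0 ≤ c)
    (hf : ∀ y y', y' ∈ K → dist y y' < δ → |f y - f y'| ≤ c) : modulusNear K δ f ≤ c :=
  Real.iSup_le (fun q => hf _ _ q.2.1 q.2.2) hc

theorem modulusNear_le_two_mul {K : Set Y} {δ C : ℝ} {f : Y → ℝ} (hC₀ : 0 ≤ C)
    (hC : ∀ y, |f y| ≤ C) : modulusNear K δ f ≤ 2 * C :=
  modulusNear_le (by positivity) fun y y' _ _ => by linarith [abs_sub (f y) (f y'), hC y, hC y']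

theorem abs_sub_le_modulusNear {K : Set Y} {δ C : ℝ} {f : Y → ℝ} (hC : ∀ y, |f y| ≤ C)
    {y y' : Y} (hy' : y' ∈ K) (hyy' : dist y y' < δ) : |f y - f y'| ≤ modulusNear K δ f := by
  refine le_ciSup (f := fun q : {q : Y × Y | q.2 ∈ K ∧ dist q.1 q.2 < δ} => |f q.1.1 - f q.1.2|)
    ⟨2 * C, ?_⟩ ⟨(y, y'), hy', hyy'⟩
  rintro _ ⟨q, rfl⟩
  linarith [abs_sub (f q.1.1) (f q.1.2), hC q.1.1, hC q.1.2]

theorem tendsto_modulusNear {K : Set Y} (hK : IsCompact K) {f : Y → ℝ} (hf : Continuous f) :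
    Tendsto (fun δ => modulusNear K δ f) (𝓝[>] 0) (𝓝 0) := by
  refine Metric.tendsto_nhds.2 fun ε hε => ?_
  obtain ⟨δ₀, hδ₀, hδ₀f⟩ := Metric.mem_uniformity_dist.1 <|
    hK.uniformContinuousAt_of_continuousAt f (fun y _ => hf.continuousAt)
      (Metric.dist_mem_uniformity (half_pos hε))
  filter_upwards [Ioo_mem_nhdsGT hδ₀] with δ hδ
  have hle : modulusNear K δ f ≤ ε / 2 := modulusNear_le (half_pos hε).le fun y y' hy' hyy' => by
    rw [abs_sub_comm, ← Real.dist_eq]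
    exact (hδ₀f (by rw [dist_comm]; exact hyy'.trans hδ.2) hy').le
  rw [Real.dist_0_eq_abs, abs_of_nonneg (modulusNear_nonneg K δ f)]
  linarith

variable [MeasurableSpace X] [MeasurableSpace Y] [SecondCountableTopology Y]

theorem measurable_modulusNear {h : X × Y → ℝ} (hh : Measurable h)
    (hc : ∀ x, Continuous fun y => h (x, y)) (K : Set Y) (δ : ℝ) :
    Measurable fun x => modulusNear K δ fun y => h (x, y) :=
  measurable_iSup_subtype_of_continuous _
    (fun _ => ((hh.comp (measurable_id.prodMk measurable_const)).sub
      (hh.comp (measurable_id.prodMk measurable_const))).abs)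
    (fun x => (((hc x).comp continuous_fst).sub ((hc x).comp continuous_snd)).abs)

theorem tendsto_integral_modulusNear (ν : Measure X) [IsFiniteMeasure ν] {h : X × Y → ℝ}
    (hh : Measurable h) {C : ℝ} (hC₀ : 0 ≤ C) (hC : ∀ p, |h p| ≤ C)
    (hc : ∀ x, Continuous fun y => h (x, y)) {K : Set Y} (hK : IsCompact K) :
    Tendsto (fun δ => ∫ x, modulusNear K δ (fun y => h (x, y)) ∂ν) (𝓝[>] 0) (𝓝 0) := by
  have hbound : ∀ δ x, ‖modulusNear K δ fun y => h (x, y)‖ ≤ 2 * C := fun δ x => by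
    rw [Real.norm_of_nonneg (modulusNear_nonneg _ _ _)]
    exact modulusNear_le_two_mul hC₀ fun y => hC (x, y)
  simpa using tendsto_integral_filter_of_dominated_convergence (fun _ => 2 * C)
    (.of_forall fun δ => (measurable_modulusNear hh hc K δ).aestronglyMeasurable)
    (.of_forall fun δ => ae_of_all _ (hbound δ)) (integrable_const _)
    (ae_of_all _ fun x => tendsto_modulusNear hK (hc x))

end ModulusNear

theorem IsCompact.exists_partitionOfUnity_ball {Y : Type*} [MetricSpace Y] {K : Set Y}
    (hK : IsCompact K) {δ : ℝ} (hδ : 0 < δ) :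
    ∃ (t : Finset Y) (ρ : PartitionOfUnity t Y K), ↑t ⊆ K ∧ ∀ c y, ρ c y ≠ 0 → dist y c < δ := by
  obtain ⟨t, htK, htfin, hcover⟩ := hK.finite_cover_balls hδ
  obtain ⟨ρ, hρ⟩ := PartitionOfUnity.exists_isSubordinate hK.isClosed
    (fun c : htfin.toFinset => ball (c : Y) δ) (fun _ => isOpen_ball)
    (by simpa [iUnion_subtype] using hcover)
  exact ⟨htfin.toFinset, ρ, by simpa using htK, fun c y hy => hρ c (subset_tsupport _ hy)⟩

namespace PartitionOfUnity

variable {ι Y : Type*} [Fintype ι] [TopologicalSpace Y] {K : Set Y} (ρ : PartitionOfUnity ι Y K)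

theorem sum_univ_nonneg (y : Y) : 0 ≤ ∑ i, ρ i y := Finset.sum_nonneg fun i _ => ρ.nonneg i y

theorem sum_univ_le_one (y : Y) : ∑ i, ρ i y ≤ 1 := by
  simpa [finsum_eq_sum_of_fintype] using ρ.sum_le_one y

theorem sum_univ_eq_one {y : Y} (hy : y ∈ K) : ∑ i, ρ i y = 1 := by
  simpa [finsum_eq_sum_of_fintype] using ρ.sum_eq_one hy

theorem abs_sub_sum_mul_le {f : Y → ℝ} {C w : ℝ} (hC : ∀ y, |f y| ≤ C)
    (hw : 0 ≤ w) (c : ι → Y) {y : Y} (hcy : ∀ i, ρ i y ≠ 0 → |f y - f (c i)| ≤ w) :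
    |f y - ∑ i, f (c i) * ρ i y| ≤ w + C * (1 - ∑ i, ρ i y) := by
  have hsum := ρ.sum_univ_le_one y
  have hsplit : f y - ∑ i, f (c i) * ρ i y =
      ∑ i, (f y - f (c i)) * ρ i y + f y * (1 - ∑ i, ρ i y) := by
    simp only [sub_mul, Finset.sum_sub_distrib, ← Finset.mul_sum]; ring
  have hterm : ∀ i, |(f y - f (c i)) * ρ i y| ≤ w * ρ i y := fun i => by
    rw [abs_mul, abs_of_nonneg (ρ.nonneg i y)]
    by_cases hi : ρ i y = 0
    · simp [hi]
    · exact mul_le_mul_of_nonneg_right (hcy i hi) (ρ.nonneg i y)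
  rw [hsplit]
  calc _ ≤ |∑ i, (f y - f (c i)) * ρ i y| + |f y * (1 - ∑ i, ρ i y)| := abs_add_le _ _
    _ ≤ ∑ i, w * ρ i y + C * (1 - ∑ i, ρ i y) := by
        gcongr
        · exact (Finset.abs_sum_le_sum_abs _ _).trans (Finset.sum_le_sum fun i _ => hterm i)
        · rw [abs_mul, abs_of_nonneg (sub_nonneg.2 hsum)]
          exact mul_le_mul_of_nonneg_right (hC y) (sub_nonneg.2 hsum)
    _ ≤ w + C * (1 - ∑ i, ρ i y) := by
        rw [← Finset.mul_sum]
        gcongr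
        nlinarith [ρ.sum_univ_nonneg y]

theorem integral_one_sub_sum_le [MeasurableSpace Y] [OpensMeasurableSpace Y] (hK : MeasurableSet K)
    (ν : Measure Y) [IsFiniteMeasure ν] : ∫ y, (1 - ∑ i, ρ i y) ∂ν ≤ ν.real Kᶜ := by
  have hmeas : Measurable fun y => 1 - ∑ i, ρ i y :=
    measurable_const.sub (Finset.measurable_sum _ fun i _ => (ρ i).continuous.measurable)
  rw [← integral_indicator_one hK.compl]
  refine integral_mono (hmeas.integrable_of_abs_le (C := 1) fun y => abs_le.2
    ⟨by linarith [ρ.sum_univ_le_one y], by linarith [ρ.sum_univ_nonneg y]⟩)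
    ((integrable_const 1).indicator hK.compl) fun y => ?_
  by_cases hy : y ∈ K
  · simp [ρ.sum_univ_eq_one hy, hy]
  · simp [hy, ρ.sum_univ_nonneg y]

end PartitionOfUnity

theorem IsCompact.exists_sum_mul_approx {Y : Type*} [MetricSpace Y] [MeasurableSpace Y]
    [BorelSpace Y] {K : Set Y} (hK : IsCompact K) {δ C : ℝ} (hδ : 0 < δ) (hC₀ : 0 ≤ C) :
    ∃ (t : Finset Y) (ψ : t → Y →ᵇ ℝ) (τ : Y →ᵇ ℝ),
      (∀ f : Y → ℝ, (∀ y, |f y| ≤ C) → ∀ y,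
        |f y - ∑ c : t, f c * ψ c y| ≤ modulusNear K δ f + τ y) ∧
      ∀ (ν : Measure Y) [IsFiniteMeasure ν], ∫ y, τ y ∂ν ≤ C * ν.real Kᶜ := by
  obtain ⟨t, ρ, htK, hρ⟩ := hK.exists_partitionOfUnity_ball hδ
  let ψ : t → Y →ᵇ ℝ := fun c => .ofNormedAddCommGroup (ρ c) (ρ c).continuous 1 fun y => by
    rw [Real.norm_of_nonneg (ρ.nonneg c y)]; exact ρ.le_one c y
  let τ : Y →ᵇ ℝ := C • (1 - ∑ c, ψ c)
  have hτ : ∀ y, τ y = C * (1 - ∑ c, ρ c y) := fun y => by simp [τ, ψ]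
  refine ⟨t, ψ, τ, fun f hf y => ?_, fun ν _ => ?_⟩
  · rw [hτ]
    exact ρ.abs_sub_sum_mul_le hf (modulusNear_nonneg _ _ _) (↑) fun c hc =>
      abs_sub_le_modulusNear hf (htK c.2) (hρ c y hc)
  · simp only [hτ, integral_const_mul]
    exact mul_le_mul_of_nonneg_left (ρ.integral_one_sub_sum_le hK.measurableSet ν) hC₀

section Marginal

variable {X Y : Type*} [MeasurableSpace X] [MeasurableSpace Y]

theorem abs_integral_sub_le_of_abs_sub_le {μ : Measure (X × Y)} {h h' : X × Y → ℝ} {w : X → ℝ}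
    {τ : Y → ℝ} (hh : Integrable h μ) (hh' : Integrable h' μ) (hw : Integrable w (μ.map Prod.fst))
    (hτ : Integrable (fun p => τ p.2) μ) (hle : ∀ p, |h p - h' p| ≤ w p.1 + τ p.2) :
    |∫ p, h p ∂μ - ∫ p, h' p ∂μ| ≤ ∫ x, w x ∂μ.map Prod.fst + ∫ p, τ p.2 ∂μ := by
  have hw' : Integrable (fun p => w p.1) μ := hw.comp_measurable measurable_fst
  rw [integral_map measurable_fst.aemeasurable hw.aestronglyMeasurable, ← integral_sub hh hh',
    ← integral_add hw' hτ]
  exact abs_integral_le_integral_abs.trans (integral_mono (hh.sub hh').abs (hw'.add hτ) hle)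

variable [TopologicalSpace Y] [OpensMeasurableSpace Y]

theorem integrable_fst_mul_snd_of_measurable (ν : Measure (X × Y)) [IsFiniteMeasure ν]
    {f : X → ℝ} (hf : Measurable f) {C : ℝ} (hC : ∀ x, |f x| ≤ C) (ψ : Y →ᵇ ℝ) :
    Integrable (fun p => f p.1 * ψ p.2) ν :=
  Measurable.integrable_of_abs_le (f := fun p : X × Y => f p.1 * ψ p.2)
    ((hf.comp measurable_fst).mul (ψ.continuous.measurable.comp measurable_snd))
    (C := |C| * ‖ψ‖) fun p => by
      rw [abs_mul]
      exact mul_le_mul ((hC _).trans (le_abs_self C)) (ψ.norm_coe_le_norm _) (abs_nonneg _)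
        (abs_nonneg C)

variable [TopologicalSpace X] {ι : Type*} {l : Filter ι} {μ : ι → Measure (X × Y)}
  {μ₀ : Measure (X × Y)} [∀ i, IsFiniteMeasure (μ i)] [IsFiniteMeasure μ₀]

theorem eventually_dist_integral_lt_of_abs_sub_le
    (hfst : ∀ i, (μ i).map Prod.fst = μ₀.map Prod.fst)
    (hconv : ∀ g : X × Y →ᵇ ℝ, Tendsto (fun i => ∫ p, g p ∂μ i) l (𝓝 (∫ p, g p ∂μ₀)))
    {h h' : X × Y → ℝ} (hh : ∀ i, Integrable h (μ i)) (hh₀ : Integrable h μ₀)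
    (hh' : ∀ i, Integrable h' (μ i)) (hh'₀ : Integrable h' μ₀) {w : X → ℝ}
    (hw : Integrable w (μ₀.map Prod.fst)) (τ : Y →ᵇ ℝ) (hle : ∀ p, |h p - h' p| ≤ w p.1 + τ p.2)
    {ε : ℝ} (hε : ∫ x, w x ∂μ₀.map Prod.fst + ∫ p, τ p.2 ∂μ₀ < ε) :
    (∀ᶠ i in l, dist (∫ p, h p ∂μ i) (∫ p, h' p ∂μ i) < ε) ∧
      dist (∫ p, h p ∂μ₀) (∫ p, h' p ∂μ₀) < ε := by
  have hbound : ∀ (ν : Measure (X × Y)) [IsFiniteMeasure ν], Integrable h ν → Integrable h' ν →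
      ν.map Prod.fst = μ₀.map Prod.fst →
      dist (∫ p, h p ∂ν) (∫ p, h' p ∂ν) ≤ ∫ x, w x ∂μ₀.map Prod.fst + ∫ p, τ p.2 ∂ν :=
    fun ν _ hhν hh'ν hν => by
      rw [Real.dist_eq, ← hν]
      exact abs_integral_sub_le_of_abs_sub_le hhν hh'ν (hν ▸ hw)
        ((τ.integrable (ν.map Prod.snd)).comp_measurable measurable_snd) hle
  have hτ : Tendsto (fun i => ∫ p, τ p.2 ∂μ i) l (𝓝 (∫ p, τ p.2 ∂μ₀)) :=
    hconv (τ.compContinuous ⟨Prod.snd, continuous_snd⟩)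
  refine ⟨?_, (hbound μ₀ hh₀ hh'₀ rfl).trans_lt hε⟩
  filter_upwards [(tendsto_const_nhds.add hτ).eventually_lt_const hε] with i hi
  exact (hbound (μ i) (hh i) (hh' i) (hfst i)).trans_lt hi

variable [TopologicalSpace.PseudoMetrizableSpace X] [BorelSpace X] [SecondCountableTopology Y]

theorem tendsto_integral_fst_mul_snd_of_measurable
    (hfst : ∀ i, (μ i).map Prod.fst = μ₀.map Prod.fst)
    (hconv : ∀ g : X × Y →ᵇ ℝ, Tendsto (fun i => ∫ p, g p ∂μ i) l (𝓝 (∫ p, g p ∂μ₀)))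
    {f : X → ℝ} (hf : Measurable f) {C : ℝ} (hC : ∀ x, |f x| ≤ C) (ψ : Y →ᵇ ℝ) :
    Tendsto (fun i => ∫ p, f p.1 * ψ p.2 ∂μ i) l (𝓝 (∫ p, f p.1 * ψ p.2 ∂μ₀)) := by
  refine tendsto_of_forall_eventually_dist_lt fun ε hε => ?_
  have hfν : Integrable f (μ₀.map Prod.fst) := hf.integrable_of_abs_le hC
  obtain ⟨f', hf'ε, -⟩ := hfν.exists_boundedContinuous_integral_sub_le
    (show 0 < ε / (2 * (‖ψ‖ + 1)) by positivity)
  let G : X × Y →ᵇ ℝ :=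
    f'.compContinuous ⟨Prod.fst, continuous_fst⟩ * ψ.compContinuous ⟨Prod.snd, continuous_snd⟩
  refine ⟨fun i => ∫ p, G p ∂μ i, ∫ p, G p ∂μ₀, hconv G,
    eventually_dist_integral_lt_of_abs_sub_le hfst hconv
      (fun _ => integrable_fst_mul_snd_of_measurable _ hf hC ψ)
      (integrable_fst_mul_snd_of_measurable _ hf hC ψ) (fun _ => G.integrable _) (G.integrable _)
      ((hfν.sub (f'.integrable _)).norm.mul_const ‖ψ‖) 0 (fun p => ?_) ?_⟩
  · simp only [G, coe_mul, coe_compContinuous, Pi.mul_apply, Function.comp_apply,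
      ContinuousMap.coe_mk, coe_zero, Pi.zero_apply, add_zero, ← sub_mul, abs_mul]
    exact mul_le_mul_of_nonneg_left (ψ.norm_coe_le_norm _) (abs_nonneg _)
  · simp only [coe_zero, Pi.zero_apply, integral_zero, add_zero, integral_mul_const]
    calc (∫ x, ‖f x - f' x‖ ∂μ₀.map Prod.fst) * ‖ψ‖
        ≤ ε / (2 * (‖ψ‖ + 1)) * (‖ψ‖ + 1) := by gcongr; linarith
      _ < ε := by field_simp; linarith

theorem tendsto_integral_sum_fst_mul_snd_of_measurable
    (hfst : ∀ i, (μ i).map Prod.fst = μ₀.map Prod.fst)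
    (hconv : ∀ g : X × Y →ᵇ ℝ, Tendsto (fun i => ∫ p, g p ∂μ i) l (𝓝 (∫ p, g p ∂μ₀)))
    {κ : Type*} [Fintype κ] {f : κ → X → ℝ} (hf : ∀ c, Measurable (f c)) {C : ℝ}
    (hC : ∀ c x, |f c x| ≤ C) (ψ : κ → Y →ᵇ ℝ) :
    Tendsto (fun i => ∫ p, ∑ c, f c p.1 * ψ c p.2 ∂μ i) l
      (𝓝 (∫ p, ∑ c, f c p.1 * ψ c p.2 ∂μ₀)) := by
  have hsum : ∀ (ν : Measure (X × Y)) [IsFiniteMeasure ν],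
      ∫ p, ∑ c, f c p.1 * ψ c p.2 ∂ν = ∑ c, ∫ p, f c p.1 * ψ c p.2 ∂ν := fun ν _ =>
    integral_finsetSum _ fun c _ => integrable_fst_mul_snd_of_measurable ν (hf c) (hC c) (ψ c)
  simp only [hsum]
  exact tendsto_finsetSum _ fun c _ =>
    tendsto_integral_fst_mul_snd_of_measurable hfst hconv (hf c) (hC c) (ψ c)

end Marginal

theorem tendsto_integral_of_measurable_of_continuous_snd {X Y ι : Type*} [TopologicalSpace X]
    [TopologicalSpace.PseudoMetrizableSpace X] [MeasurableSpace X] [BorelSpace X] [MetricSpace Y]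
    [CompleteSpace Y] [SecondCountableTopology Y] [MeasurableSpace Y] [BorelSpace Y]
    {l : Filter ι} {μ : ι → Measure (X × Y)} {μ₀ : Measure (X × Y)} [∀ i, IsFiniteMeasure (μ i)]
    [IsFiniteMeasure μ₀] (hfst : ∀ i, (μ i).map Prod.fst = μ₀.map Prod.fst)
    (hconv : ∀ g : X × Y →ᵇ ℝ, Tendsto (fun i => ∫ p, g p ∂μ i) l (𝓝 (∫ p, g p ∂μ₀)))
    {h : X × Y → ℝ} (hh : Measurable h) {C : ℝ} (hC : ∀ p, |h p| ≤ C)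
    (hc : ∀ x, Continuous fun y => h (x, y)) :
    Tendsto (fun i => ∫ p, h p ∂μ i) l (𝓝 (∫ p, h p ∂μ₀)) := by
  obtain ⟨C, hC₀, hC⟩ : ∃ C, 0 ≤ C ∧ ∀ p, |h p| ≤ C :=
    ⟨max C 0, le_max_right _ _, fun p => (hC p).trans (le_max_left _ _)⟩
  refine tendsto_of_forall_eventually_dist_lt fun ε hε => ?_
  obtain ⟨K, hK, hKε⟩ := exists_isCompact_measureReal_compl_lt (μ₀.map Prod.snd)
    (show 0 < ε / (2 * (C + 1)) by positivity)
  obtain ⟨δ, hδε, hδ⟩ := (((tendsto_integral_modulusNear (μ₀.map Prod.fst) hh hC₀ hC hc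
    hK).eventually_lt_const (half_pos hε)).and self_mem_nhdsWithin).exists
  obtain ⟨t, ψ, τ, happrox, hτ⟩ := hK.exists_sum_mul_approx hδ hC₀
  have hslice : ∀ c : Y, Measurable fun x => h (x, c) := fun c =>
    hh.comp (measurable_id.prodMk measurable_const)
  have hh' : ∀ (ν : Measure (X × Y)) [IsFiniteMeasure ν],
      Integrable (fun p => ∑ c : t, h (p.1, c) * ψ c p.2) ν := fun ν _ =>
    integrable_finsetSum _ fun c _ =>
      integrable_fst_mul_snd_of_measurable ν (hslice c) (fun x => hC (x, c)) (ψ c)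
  have hw : Integrable (fun x => modulusNear K δ fun y => h (x, y)) (μ₀.map Prod.fst) :=
    (measurable_modulusNear hh hc K δ).integrable_of_abs_le (C := 2 * C) fun x => by
      rw [abs_of_nonneg (modulusNear_nonneg _ _ _)]
      exact modulusNear_le_two_mul hC₀ fun y => hC (x, y)
  refine ⟨_, _, tendsto_integral_sum_fst_mul_snd_of_measurable hfst hconv
      (f := fun (c : t) x => h (x, c)) (fun c => hslice c) (fun c x => hC (x, c)) ψ,
    eventually_dist_integral_lt_of_abs_sub_le hfst hconv (fun _ => hh.integrable_of_abs_le hC)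
      (hh.integrable_of_abs_le hC) (fun _ => hh' _) (hh' _) hw τ
      (fun ⟨x, y⟩ => happrox _ (fun y => hC (x, y)) y) ?_⟩
  have hτε : ∫ p, τ p.2 ∂μ₀ ≤ ε / 2 := calc
    ∫ p, τ p.2 ∂μ₀ = ∫ y, τ y ∂μ₀.map Prod.snd :=
      (integral_map measurable_snd.aemeasurable τ.continuous.aestronglyMeasurable).symm
    _ ≤ C * (μ₀.map Prod.snd).real Kᶜ := hτ _
    _ ≤ C * (ε / (2 * (C + 1))) := by gcongr
    _ ≤ ε / 2 := by rw [mul_div_assoc', div_le_div_iff₀ (by positivity) two_pos]; nlinarith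
  linarith

/-- If `(Aₙ, Bₙ)` converges in distribution to `(A, B)` in `ℝ × ℝ^k` with `Aₙ` equal
in distribution to `A` for all `n`, then for any measurable `φ : ℝ × ℝ^k → ℝ^{k'}`
(possibly unbounded) that is continuous in all but the first coordinate,
`φ(Aₙ, Bₙ)` converges in distribution to `φ(A, B)`. -/
theorem stmt_3 {k k' : ℕ} {Ω : Type*} [MeasureSpace Ω] [IsProbabilityMeasure (ℙ : Measure Ω)]
    (A : ℕ → Ω → ℝ) (B : ℕ → Ω → EuclideanSpace ℝ (Fin k))
    (A₀ : Ω → ℝ) (B₀ : Ω → EuclideanSpace ℝ (Fin k))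
    (hAmeas : ∀ n, Measurable (A n)) (hBmeas : ∀ n, Measurable (B n))
    (hA₀meas : Measurable A₀) (hB₀meas : Measurable B₀)
    (hconv : ∀ g : (ℝ × EuclideanSpace ℝ (Fin k)) →ᵇ ℝ,
      Tendsto (fun n => ∫ ω, g (A n ω, B n ω)) atTop (nhds (∫ ω, g (A₀ ω, B₀ ω))))
    (hAlaw : ∀ n, Measure.map (A n) ℙ = Measure.map A₀ ℙ)
    (φ : ℝ × EuclideanSpace ℝ (Fin k) → EuclideanSpace ℝ (Fin k'))
    (hφmeas : Measurable φ)
    (hφcont : ∀ a, Continuous fun b => φ (a, b)) :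
    ∀ g : EuclideanSpace ℝ (Fin k') →ᵇ ℝ,
      Tendsto (fun n => ∫ ω, g (φ (A n ω, B n ω))) atTop
        (nhds (∫ ω, g (φ (A₀ ω, B₀ ω)))) := by
  intro g
  have hmeas : ∀ n, Measurable fun ω => (A n ω, B n ω) := fun n => (hAmeas n).prodMk (hBmeas n)
  have hmeas₀ : Measurable fun ω => (A₀ ω, B₀ ω) := hA₀meas.prodMk hB₀meas
  have hmap : ∀ {Z : Ω → ℝ × EuclideanSpace ℝ (Fin k)}, Measurable Z →
      ∀ f : ℝ × EuclideanSpace ℝ (Fin k) → ℝ, Measurable f →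
        ∫ p, f p ∂Measure.map Z ℙ = ∫ ω, f (Z ω) :=
    fun hZ f hf => integral_map hZ.aemeasurable hf.aestronglyMeasurable
  have hfst : ∀ n, (Measure.map (fun ω => (A n ω, B n ω)) ℙ).map Prod.fst
      = (Measure.map (fun ω => (A₀ ω, B₀ ω)) ℙ).map Prod.fst := fun n => by
    rw [Measure.map_map measurable_fst (hmeas n), Measure.map_map measurable_fst hmeas₀]
    exact hAlaw n
  have hconv' : ∀ G : (ℝ × EuclideanSpace ℝ (Fin k)) →ᵇ ℝ,
      Tendsto (fun n => ∫ p, G p ∂Measure.map (fun ω => (A n ω, B n ω)) ℙ) atTop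
        (𝓝 (∫ p, G p ∂Measure.map (fun ω => (A₀ ω, B₀ ω)) ℙ)) := fun G => by
    simpa only [hmap (hmeas _) _ G.continuous.measurable, hmap hmeas₀ _ G.continuous.measurable]
      using hconv G
  have hgφ : Measurable fun p => g (φ p) := g.continuous.measurable.comp hφmeas
  simpa only [hmap (hmeas _) _ hgφ, hmap hmeas₀ _ hgφ] using
    tendsto_integral_of_measurable_of_continuous_snd hfst hconv' hgφ
      (fun p => g.norm_coe_le_norm (φ p)) (fun a => g.continuous.comp (hφcont a))
end

section
/- For a bounded positive family of densities p(·|x), the Gaussian-smoothed density x ↦ E_{G₁}[p(y | x + σG₀ + τ̃G₁, u)] with τ̃ > 0 is differentiable in x, with derivative (1/τ̃²) ∫ p(y | σG₀ + s, u) ((s - x)/(√(2π) τ̃)) e^{-(s-x)²/(2τ̃²)} ds, and d/dx log E_{G₁} p(y | x + σG₀ + τ̃G₁, u) = (1/τ̃) E[G₁ | Y = y, G₀, U = u]. -/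
/-!
Writing `E q(m + τG)` as `∫ q dN(m, τ²)`, all dependence on `m` sits in the Gaussian density,
whose `m`-derivative is the density times `(s - m)/τ²`. For `|m - x| ≤ 1` this derivative is
dominated by a multiple of `exp(-(s - x)²/(8τ²))`, so for bounded measurable `q` one may
differentiate under the integral sign. Changing variables back turns `(s - m)/τ²` into `G/τ`,
and positivity of `p` makes the logarithm differentiable.
-/

open MeasureTheory ProbabilityTheory
open scoped NNReal

lemma gaussianReal_map_const_add_const_mul (m τ : ℝ) :
    (gaussianReal 0 1).map (fun g => m + τ * g) = gaussianReal m (τ ^ 2).toNNReal := by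
  have hcomp : (fun g : ℝ => m + τ * g) = (m + ·) ∘ (τ * ·) := rfl
  rw [hcomp, ← Measure.map_map (by fun_prop) (by fun_prop), gaussianReal_map_const_mul,
    gaussianReal_map_const_add]
  congr 1
  · ring
  · ext; simp [sq_nonneg]

lemma integral_gaussianReal_comp_affine {f : ℝ → ℝ} (hf : Measurable f) (m τ : ℝ) :
    ∫ g, f (m + τ * g) ∂gaussianReal 0 1 = ∫ s, f s ∂gaussianReal m (τ ^ 2).toNNReal := by
  rw [← gaussianReal_map_const_add_const_mul,
    integral_map (by fun_prop) hf.aestronglyMeasurable]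

lemma integral_mul_comp_affine_gaussianReal {q : ℝ → ℝ} (hq : Measurable q) (m : ℝ)
    {τ : ℝ} (hτ : τ ≠ 0) :
    ∫ g, g * q (m + τ * g) ∂gaussianReal 0 1
      = ∫ s, (s - m) / τ * q s ∂gaussianReal m (τ ^ 2).toNNReal := by
  rw [← integral_gaussianReal_comp_affine (by fun_prop)]
  congr with g
  field_simp
  ring

lemma gaussianPDFReal_sq (m s : ℝ) {τ : ℝ} (hτ : 0 ≤ τ) :
    gaussianPDFReal m (τ ^ 2).toNNReal s
      = (Real.sqrt (2 * Real.pi) * τ)⁻¹ * Real.exp (-(s - m) ^ 2 / (2 * τ ^ 2)) := by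
  simp only [gaussianPDFReal, Real.coe_toNNReal _ (sq_nonneg τ)]
  rw [Real.sqrt_mul (by positivity), Real.sqrt_sq hτ]

lemma hasDerivAt_gaussianPDFReal_mean (v : ℝ≥0) (s m : ℝ) :
    HasDerivAt (fun m' => gaussianPDFReal m' v s) (gaussianPDFReal m v s * ((s - m) / v)) m := by
  have hexponent : HasDerivAt (fun m' : ℝ => -(s - m') ^ 2 / (2 * v)) ((s - m) / v) m := by
    refine ((((hasDerivAt_id m).const_sub s).pow 2).neg.div_const (2 * (v : ℝ))).congr_deriv ?_
    simp only [Nat.cast_ofNat, id_eq, Nat.add_one_sub_one, pow_one, mul_neg, mul_one, neg_neg]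
    ring
  refine (hexponent.exp.const_mul (Real.sqrt (2 * Real.pi * v))⁻¹).congr_deriv ?_
  simp only [gaussianPDFReal]
  ring

lemma abs_mul_exp_neg_sq_le {v : ℝ} (hv : 0 < v) (t : ℝ) :
    |t| * Real.exp (-t ^ 2 / (2 * v)) ≤ (1 + 4 * v) * Real.exp (-t ^ 2 / (4 * v)) := by
  have hexp := Real.add_one_le_exp (t ^ 2 / (4 * v))
  have hone : 1 ≤ Real.exp (t ^ 2 / (4 * v)) := Real.one_le_exp (by positivity)
  have hsq : t ^ 2 ≤ 4 * v * Real.exp (t ^ 2 / (4 * v)) := by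
    have : t ^ 2 = 4 * v * (t ^ 2 / (4 * v)) := by field_simp
    nlinarith
  have habs : |t| ≤ (1 + 4 * v) * Real.exp (t ^ 2 / (4 * v)) := by
    nlinarith [sq_abs t, sq_nonneg (|t| - 1)]
  calc |t| * Real.exp (-t ^ 2 / (2 * v))
      ≤ (1 + 4 * v) * Real.exp (t ^ 2 / (4 * v)) * Real.exp (-t ^ 2 / (2 * v)) := by gcongr
    _ = (1 + 4 * v) * Real.exp (-t ^ 2 / (4 * v)) := by
      rw [mul_assoc, ← Real.exp_add]
      congr 2
      field_simp
      ring

lemma exp_neg_sq_le_of_abs_sub_le {v : ℝ} (hv : 0 < v) {m x : ℝ} (h : |m - x| ≤ 1) (s : ℝ) :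
    Real.exp (-(s - m) ^ 2 / (4 * v))
      ≤ Real.exp (1 / (4 * v)) * Real.exp (-(8 * v)⁻¹ * (s - x) ^ 2) := by
  rw [← Real.exp_add, Real.exp_le_exp]
  have hmx : (m - x) ^ 2 ≤ 1 := by nlinarith [abs_le.mp h, sq_abs (m - x), abs_nonneg (m - x)]
  have hsx : (s - x) ^ 2 ≤ 2 * (s - m) ^ 2 + 2 := by nlinarith [sq_nonneg (s - m - (m - x))]
  rw [div_add' _ _ _ (by positivity), div_le_div_iff₀ (by positivity) (by positivity)]
  field_simp
  nlinarith

lemma exists_abs_gaussianPDFReal_mul_sub_div_le {v : ℝ≥0} (hv : v ≠ 0) (x : ℝ) :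
    ∃ K, ∀ m, |m - x| ≤ 1 → ∀ s,
      |gaussianPDFReal m v s * ((s - m) / v)| ≤ K * Real.exp (-(8 * v)⁻¹ * (s - x) ^ 2) := by
  have hv' : (0 : ℝ) < v := NNReal.coe_pos.mpr (pos_iff_ne_zero.mpr hv)
  refine ⟨(Real.sqrt (2 * Real.pi * v))⁻¹ / v * (1 + 4 * v) * Real.exp (1 / (4 * v)),
    fun m hm s => ?_⟩
  calc |gaussianPDFReal m v s * ((s - m) / v)|
      = (Real.sqrt (2 * Real.pi * v))⁻¹ / v * (|s - m| * Real.exp (-(s - m) ^ 2 / (2 * v))) := by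
        rw [abs_mul, abs_of_nonneg (gaussianPDFReal_nonneg m v s), abs_div, abs_of_pos hv']
        simp only [gaussianPDFReal]
        ring
    _ ≤ (Real.sqrt (2 * Real.pi * v))⁻¹ / v *
          ((1 + 4 * v) * Real.exp (-(s - m) ^ 2 / (4 * v))) :=
        mul_le_mul_of_nonneg_left (abs_mul_exp_neg_sq_le hv' _) (by positivity)
    _ ≤ (Real.sqrt (2 * Real.pi * v))⁻¹ / v *
          ((1 + 4 * v) * (Real.exp (1 / (4 * v)) * Real.exp (-(8 * v)⁻¹ * (s - x) ^ 2))) := by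
        gcongr
        exact exp_neg_sq_le_of_abs_sub_le hv' hm s
    _ = _ := by ring

lemma hasDerivAt_integral_gaussianReal_mean {q : ℝ → ℝ} (hq : Measurable q) {C : ℝ}
    (hC : ∀ s, ‖q s‖ ≤ C) {v : ℝ≥0} (hv : v ≠ 0) (x : ℝ) :
    HasDerivAt (fun m => ∫ s, q s ∂gaussianReal m v)
      (∫ s, (s - x) / v * q s ∂gaussianReal x v) x := by
  obtain ⟨K, hK⟩ := exists_abs_gaussianPDFReal_mul_sub_div_le hv x
  simp only [integral_gaussianReal_eq_integral_smul hv, smul_eq_mul]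
  refine (hasDerivAt_integral_of_dominated_loc_of_deriv_le
    (F' := fun m s => gaussianPDFReal m v s * ((s - m) / v * q s))
    (bound := fun s => K * Real.exp (-(8 * v)⁻¹ * (s - x) ^ 2) * C)
    (Metric.ball_mem_nhds x one_pos)
    (.of_forall fun m => ((measurable_gaussianPDFReal m v).mul hq).aestronglyMeasurable)
    ((integrable_gaussianPDFReal x v).mul_bdd hq.aestronglyMeasurable (ae_of_all _ hC))
    (by fun_prop) (ae_of_all _ fun s m hm => ?_) ?_ (ae_of_all _ fun s m _ => ?_)).2
  · rw [← mul_assoc, norm_mul, Real.norm_eq_abs]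
    exact mul_le_mul (hK m (Metric.mem_ball.mp hm).le s) (hC s) (norm_nonneg _)
      ((abs_nonneg _).trans (hK m (Metric.mem_ball.mp hm).le s))
  · have hb : (0 : ℝ) < (8 * v)⁻¹ := by positivity
    exact (((integrable_exp_neg_mul_sq hb).comp_sub_right x).const_mul K).mul_const C
  · exact ((hasDerivAt_gaussianPDFReal_mean v s m).mul_const (q s)).congr_deriv (mul_assoc _ _ _)

lemma hasDerivAt_integral_comp_affine_gaussianReal {q : ℝ → ℝ} (hq : Measurable q) {C : ℝ}
    (hC : ∀ s, ‖q s‖ ≤ C) {τ : ℝ} (hτ : τ ≠ 0) (x : ℝ) :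
    HasDerivAt (fun m => ∫ g, q (m + τ * g) ∂gaussianReal 0 1)
      (1 / τ * ∫ g, g * q (x + τ * g) ∂gaussianReal 0 1) x := by
  have hv : (τ ^ 2).toNNReal ≠ 0 := (Real.toNNReal_pos.mpr (by positivity)).ne'
  simp only [integral_gaussianReal_comp_affine hq, integral_mul_comp_affine_gaussianReal hq x hτ,
    ← integral_const_mul]
  refine (hasDerivAt_integral_gaussianReal_mean hq hC hv x).congr_deriv
    (integral_congr_ae (ae_of_all _ fun s => ?_))
  rw [Real.coe_toNNReal _ (sq_nonneg τ)]
  ring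

lemma integral_pos_of_forall_pos {α : Type*} [MeasurableSpace α] {μ : Measure α} [NeZero μ]
    {f : α → ℝ} (hf : Integrable f μ) (hpos : ∀ a, 0 < f a) : 0 < ∫ a, f a ∂μ := by
  rw [integral_pos_iff_support_of_nonneg (fun a => (hpos a).le) hf,
    Function.support_eq_univ fun a => (hpos a).ne']
  exact Measure.measure_univ_pos.mpr (NeZero.ne μ)

theorem stmt_5_general (p : ℝ → ℝ → ℝ → ℝ)
    (hpmeas : Measurable fun yxu : ℝ × ℝ × ℝ => p yxu.1 yxu.2.1 yxu.2.2)
    (hppos : ∀ y x u, 0 < p y x u)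
    (hpbdd : ∃ Cp : ℝ, ∀ y x u, p y x u ≤ Cp)
    (σ tauT : ℝ) (htau : 0 < tauT) :
    ∀ (y g₀ u x : ℝ),
      HasDerivAt (fun x' => ∫ g, p y (x' + σ * g₀ + tauT * g) u ∂(gaussianReal 0 1))
        ((1 / tauT ^ 2) *
          ∫ s, p y (σ * g₀ + s) u * ((s - x) / (Real.sqrt (2 * Real.pi) * tauT)) *
            Real.exp (-(s - x) ^ 2 / (2 * tauT ^ 2))) x ∧
      deriv (fun x' => Real.log
          (∫ g, p y (x' + σ * g₀ + tauT * g) u ∂(gaussianReal 0 1))) x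
        = (1 / tauT) *
            (∫ g, g * p y (x + σ * g₀ + tauT * g) u ∂(gaussianReal 0 1)) /
              (∫ g, p y (x + σ * g₀ + tauT * g) u ∂(gaussianReal 0 1)) := by
  intro y g₀ u x
  obtain ⟨Cp, hCp⟩ := hpbdd
  let q : ℝ → ℝ := fun s => p y (σ * g₀ + s) u
  have hq : Measurable q := hpmeas.comp (f := fun s => (y, σ * g₀ + s, u)) (by fun_prop)
  have hqC : ∀ s, ‖q s‖ ≤ Cp := fun s =>
    (Real.norm_of_nonneg (hppos _ _ _).le).trans_le (hCp _ _ _)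
  have hshift : ∀ x' g, p y (x' + σ * g₀ + tauT * g) u = q (x' + tauT * g) := fun x' g =>
    congrArg (p y · u) (by ring)
  have hD := hasDerivAt_integral_comp_affine_gaussianReal hq hqC htau.ne' x
  have hpos : 0 < ∫ g, q (x + tauT * g) ∂gaussianReal 0 1 :=
    integral_pos_of_forall_pos
      (.of_bound (hq.comp (by fun_prop)).aestronglyMeasurable Cp (ae_of_all _ fun _ => hqC _))
      fun _ => hppos _ _ _
  simp only [hshift]
  refine ⟨hD.congr_deriv ?_, (hD.log hpos.ne').deriv⟩
  have hv : (tauT ^ 2).toNNReal ≠ 0 := (Real.toNNReal_pos.mpr (by positivity)).ne'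
  rw [integral_mul_comp_affine_gaussianReal hq x htau.ne',
    integral_gaussianReal_eq_integral_smul hv, ← integral_const_mul, ← integral_const_mul]
  refine integral_congr_ae (ae_of_all _ fun s => ?_)
  simp only [smul_eq_mul, gaussianPDFReal_sq _ _ htau.le, q]
  field_simp

/-- For a bounded positive family of densities `p(·|x,u)` (w.r.t. a base measure) and
`τ̃ > 0`, the Gaussian-smoothed density `x ↦ E_{G₁}[p(y | x + σG₀ + τ̃G₁, u)]` is
differentiable in `x`, with derivative
`(1/τ̃²) ∫ p(y | σG₀ + s, u) ((s - x)/(√(2π) τ̃)) e^{-(s-x)²/(2τ̃²)} ds`, and its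
logarithmic derivative equals `(1/τ̃)·E[G₁ | Y = y, G₀ = g₀, U = u]`, the latter being
the posterior-mean ratio `∫ g·p(y|x+σg₀+τ̃g,u) dγ(g) / ∫ p(y|x+σg₀+τ̃g,u) dγ(g)`. -/
theorem stmt_5 (p : ℝ → ℝ → ℝ → ℝ) (μY : Measure ℝ) [SigmaFinite μY]
    (hpmeas : Measurable fun yxu : ℝ × ℝ × ℝ => p yxu.1 yxu.2.1 yxu.2.2)
    (hppos : ∀ y x u, 0 < p y x u)
    (hpbdd : ∃ Cp : ℝ, ∀ y x u, p y x u ≤ Cp)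
    (hpdens : ∀ x u, ∫ y, p y x u ∂μY = 1)
    (σ tauT : ℝ) (hσ : 0 ≤ σ) (htau : 0 < tauT) :
    ∀ (y g₀ u x : ℝ),
      HasDerivAt (fun x' => ∫ g, p y (x' + σ * g₀ + tauT * g) u ∂(gaussianReal 0 1))
        ((1 / tauT ^ 2) *
          ∫ s, p y (σ * g₀ + s) u * ((s - x) / (Real.sqrt (2 * Real.pi) * tauT)) *
            Real.exp (-(s - x) ^ 2 / (2 * tauT ^ 2))) x ∧
      deriv (fun x' => Real.log
          (∫ g, p y (x' + σ * g₀ + tauT * g) u ∂(gaussianReal 0 1))) x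
        = (1 / tauT) *
            (∫ g, g * p y (x + σ * g₀ + tauT * g) u ∂(gaussianReal 0 1)) /
              (∫ g, p y (x + σ * g₀ + tauT * g) u ∂(gaussianReal 0 1)) :=
  stmt_5_general p hpmeas hppos hpbdd σ tauT htau
end

section
/- Let ℓ be a quadratically-bounded loss and let R(y, τ, v, K, M) be the posterior Bayes risk under Gaussian noise of variance τ² for the K-truncated prior. For fixed finite K, R is bounded uniformly by R̄(K) = max_{‖ϑ‖_∞ ≤ K} ℓ(ϑ, 0), and the function (y, τ) ↦ R(y, τ, v, K, M) is continuous on ℝ^k × ℝ_{>0}. In particular, y ↦ R(y, τ, v, K, M) is Lipschitz with constant 2K√k R̄(K)/τ². -/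
/-!
If the prior lives in the ball of radius `S = K√k`, replacing the observation `y'` by `y` changes
the Gaussian log-likelihood `-‖y - ϑ‖² / (2τ²)`, up to an additive constant that cancels in the
posterior, by at most `Δ = S‖y - y'‖/τ²` uniformly in `ϑ`. Hence every posterior expected loss,
and so their infimum `R`, changes at most by a factor `e^{±2Δ}`. As `0 ≤ R ≤ R̄` (take `d = 0`),
this gives `|R(y) - R(y')| ≤ (1 - e^{-2Δ}) R̄ ≤ 2Δ R̄`. Changing `τ` is handled the same way, and
the two estimates together give joint continuity.
-/

open MeasureTheory ProbabilityTheory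
open scoped ProbabilityTheory ENNReal

open Real Set Filter Topology

lemma sub_le_mul_of_le_exp_mul {a b B t : ℝ} (ha : 0 ≤ a) (haB : a ≤ B) (ht : 0 ≤ t)
    (hab : a ≤ exp t * b) : a - b ≤ t * B := by
  have hb : exp (-t) * a ≤ b := by
    rw [exp_neg, inv_mul_le_iff₀ (exp_pos t)]
    exact hab
  calc a - b ≤ a * (1 - exp (-t)) := by linarith
    _ ≤ a * t := by gcongr; linarith [add_one_le_exp (-t)]
    _ ≤ t * B := by rw [mul_comm]; gcongr

lemma abs_sub_le_mul_of_le_exp_mul {a b B t : ℝ} (ha : 0 ≤ a) (hb : 0 ≤ b) (haB : a ≤ B)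
    (hbB : b ≤ B) (ht : 0 ≤ t) (hab : a ≤ exp t * b) (hba : b ≤ exp t * a) :
    |a - b| ≤ t * B :=
  abs_sub_le_iff.2
    ⟨sub_le_mul_of_le_exp_mul ha haB ht hab, sub_le_mul_of_le_exp_mul hb hbB ht hba⟩

lemma abs_le_of_pseudoLipschitz {F : Type*} [SeminormedAddCommGroup F] {f : F → ℝ} {C r : ℝ}
    (hf : ∀ x x', |f x - f x'| ≤ C * (1 + ‖x‖ + ‖x'‖) * ‖x - x'‖) {x : F} (hx : ‖x‖ ≤ r) :
    |f x| ≤ |f 0| + |C| * (1 + r) * r := by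
  have hr : 0 ≤ r := (norm_nonneg x).trans hx
  have h := hf x 0
  rw [norm_zero, add_zero, sub_zero] at h
  calc |f x| ≤ |f 0| + |f x - f 0| := by linarith [abs_sub_abs_le_abs_sub (f x) (f 0)]
    _ ≤ |f 0| + |C| * (1 + r) * r := by
      gcongr
      calc |f x - f 0| ≤ C * (1 + ‖x‖) * ‖x‖ := h
        _ ≤ |C| * (1 + ‖x‖) * ‖x‖ := by gcongr; exact le_abs_self C
        _ ≤ |C| * (1 + r) * r := by gcongr

lemma memLp_top_of_pseudoLipschitz {E F : Type*} [SeminormedAddCommGroup E]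
    [SeminormedAddCommGroup F] [MeasurableSpace E] [MeasurableSpace F] {μ : Measure E}
    [IsFiniteMeasure μ] {f : E × F → ℝ} {C S : ℝ} (hf_meas : Measurable f)
    (hf : ∀ x x', |f x - f x'| ≤ C * (1 + ‖x‖ + ‖x'‖) * ‖x - x'‖)
    (hμ : ∀ᵐ ϑ ∂μ, ‖ϑ‖ ≤ S) (d : F) : MemLp (fun ϑ => f (ϑ, d)) ∞ μ := by
  have hmeas : Measurable fun ϑ => f (ϑ, d) :=
    hf_meas.comp (measurable_id.prodMk measurable_const)
  refine MemLp.of_bound hmeas.aestronglyMeasurable (|f 0| + |C| * (1 + max S ‖d‖) * max S ‖d‖)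
    (hμ.mono fun ϑ hϑ => ?_)
  rw [norm_eq_abs]
  exact abs_le_of_pseudoLipschitz hf (by rw [Prod.norm_mk]; gcongr)

lemma EuclideanSpace.norm_le_mul_sqrt_of_abs_le {k : ℕ} {K : ℝ} (hK : 0 ≤ K)
    {ϑ : EuclideanSpace ℝ (Fin k)} (hϑ : ∀ i, |ϑ i| ≤ K) : ‖ϑ‖ ≤ K * √k := by
  rw [EuclideanSpace.norm_eq, ← sqrt_sq hK, ← sqrt_mul (sq_nonneg K)]
  gcongr
  calc ∑ i, ‖ϑ i‖ ^ 2 ≤ ∑ _i : Fin k, K ^ 2 := by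
        gcongr with i; rw [norm_eq_abs]; exact hϑ i
    _ = K ^ 2 * k := by simp [mul_comm]

noncomputable section Gibbs

variable {α ι : Type*} [MeasurableSpace α] {μ : Measure α}

/-- The mean of `f` under the probability density proportional to `exp ∘ g` with respect to `μ`.
With `g` a log-likelihood and `μ` the prior, `gibbsRisk` is the posterior Bayes risk. -/
def gibbsMean (μ : Measure α) (f g : α → ℝ) : ℝ :=
  (∫ x, f x * exp (g x) ∂μ) / ∫ x, exp (g x) ∂μ

def gibbsRisk (μ : Measure α) (ℓ : ι → α → ℝ) (g : α → ℝ) : ℝ :=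
  ⨅ i, gibbsMean μ (ℓ i) g

lemma gibbsMean_nonneg {f : α → ℝ} (hf : 0 ≤ᵐ[μ] f) (g : α → ℝ) : 0 ≤ gibbsMean μ f g :=
  div_nonneg (integral_nonneg_of_ae (hf.mono fun _ hx => mul_nonneg hx (exp_pos _).le))
    (integral_nonneg fun _ => (exp_pos _).le)

lemma gibbsMean_le [NeZero μ] {f g : α → ℝ} {B : ℝ} (hf : MemLp f ∞ μ)
    (hg : Integrable (fun x => exp (g x)) μ) (hfB : ∀ᵐ x ∂μ, f x ≤ B) :
    gibbsMean μ f g ≤ B := by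
  rw [gibbsMean, div_le_iff₀ (integral_exp_pos hg), ← integral_const_mul]
  refine integral_mono_ae (hg.mul_of_top_right hf) (hg.const_mul B) ?_
  filter_upwards [hfB] with x hx
  exact mul_le_mul_of_nonneg_right hx (exp_pos _).le

lemma gibbsMean_le_exp_mul [NeZero μ] {f g g' : α → ℝ} {c Δ : ℝ} (hf0 : 0 ≤ᵐ[μ] f)
    (hf : MemLp f ∞ μ) (hg : Integrable (fun x => exp (g x)) μ)
    (hg' : Integrable (fun x => exp (g' x)) μ) (hgg' : ∀ᵐ x ∂μ, |g x - g' x - c| ≤ Δ) :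
    gibbsMean μ f g ≤ exp (2 * Δ) * gibbsMean μ f g' := by
  have hnum : ∫ x, f x * exp (g x) ∂μ ≤ exp (c + Δ) * ∫ x, f x * exp (g' x) ∂μ := by
    rw [← integral_const_mul]
    refine integral_mono_of_nonneg (hf0.mono fun x hx => mul_nonneg hx (exp_pos _).le)
      ((hg'.mul_of_top_right hf).const_mul _) ?_
    filter_upwards [hf0, hgg'] with x hx hxg
    rw [mul_left_comm, ← exp_add]
    gcongr
    linarith [(abs_le.1 hxg).2]
  have hden : exp (c - Δ) * ∫ x, exp (g' x) ∂μ ≤ ∫ x, exp (g x) ∂μ := by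
    rw [← integral_const_mul]
    refine integral_mono_ae (hg'.const_mul _) hg ?_
    filter_upwards [hgg'] with x hxg
    rw [← exp_add]
    gcongr
    linarith [(abs_le.1 hxg).1]
  have hnum'_nonneg : 0 ≤ ∫ x, f x * exp (g' x) ∂μ :=
    integral_nonneg_of_ae (hf0.mono fun _ hx => mul_nonneg hx (exp_pos _).le)
  have hZ' := integral_exp_pos hg'
  calc gibbsMean μ f g
      ≤ (exp (c + Δ) * ∫ x, f x * exp (g' x) ∂μ) / (exp (c - Δ) * ∫ x, exp (g' x) ∂μ) :=
        div_le_div₀ (by positivity) hnum (by positivity) hden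
    _ = exp (2 * Δ) * gibbsMean μ f g' := by
      rw [mul_div_mul_comm, ← exp_sub, gibbsMean]
      ring_nf

lemma gibbsRisk_nonneg {ℓ : ι → α → ℝ} (hℓ0 : ∀ i, 0 ≤ᵐ[μ] ℓ i) (g : α → ℝ) :
    0 ≤ gibbsRisk μ ℓ g :=
  Real.iInf_nonneg fun i => gibbsMean_nonneg (hℓ0 i) g

lemma gibbsRisk_le_gibbsMean {ℓ : ι → α → ℝ} (hℓ0 : ∀ i, 0 ≤ᵐ[μ] ℓ i) (g : α → ℝ) (i : ι) :
    gibbsRisk μ ℓ g ≤ gibbsMean μ (ℓ i) g :=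
  ciInf_le ⟨0, forall_mem_range.2 fun i => gibbsMean_nonneg (hℓ0 i) g⟩ i

lemma gibbsRisk_le_of_ae_le [NeZero μ] {ℓ : ι → α → ℝ} {g : α → ℝ} {B : ℝ}
    (hℓ0 : ∀ i, 0 ≤ᵐ[μ] ℓ i) {i : ι} (hℓ : MemLp (ℓ i) ∞ μ)
    (hg : Integrable (fun x => exp (g x)) μ) (hB : ∀ᵐ x ∂μ, ℓ i x ≤ B) : gibbsRisk μ ℓ g ≤ B :=
  (gibbsRisk_le_gibbsMean hℓ0 g i).trans (gibbsMean_le hℓ hg hB)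

lemma gibbsRisk_le_exp_mul [NeZero μ] {ℓ : ι → α → ℝ} {g g' : α → ℝ} {c Δ : ℝ}
    (hℓ0 : ∀ i, 0 ≤ᵐ[μ] ℓ i) (hℓ : ∀ i, MemLp (ℓ i) ∞ μ)
    (hg : Integrable (fun x => exp (g x)) μ) (hg' : Integrable (fun x => exp (g' x)) μ)
    (hgg' : ∀ᵐ x ∂μ, |g x - g' x - c| ≤ Δ) :
    gibbsRisk μ ℓ g ≤ exp (2 * Δ) * gibbsRisk μ ℓ g' := by
  rw [gibbsRisk, gibbsRisk, Real.mul_iInf_of_nonneg (exp_pos _).le]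
  exact ciInf_mono ⟨0, forall_mem_range.2 fun i => gibbsMean_nonneg (hℓ0 i) g⟩
    fun i => gibbsMean_le_exp_mul (hℓ0 i) (hℓ i) hg hg' hgg'

end Gibbs

noncomputable section Gaussian

variable {E : Type*}

def gaussLogLik [SeminormedAddCommGroup E] (τ : ℝ) (y ϑ : E) : ℝ := -‖y - ϑ‖ ^ 2 / (2 * τ ^ 2)

section Seminormed

variable [SeminormedAddCommGroup E]

lemma gaussLogLik_nonpos (τ : ℝ) (y ϑ : E) : gaussLogLik τ y ϑ ≤ 0 :=
  div_nonpos_of_nonpos_of_nonneg (neg_nonpos.2 (sq_nonneg _)) (by positivity)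

lemma integrable_exp_gaussLogLik [MeasurableSpace E] [OpensMeasurableSpace E] {μ : Measure E}
    [IsFiniteMeasure μ] (τ : ℝ) (y : E) : Integrable (fun ϑ => exp (gaussLogLik τ y ϑ)) μ := by
  have hcont : Continuous fun ϑ => exp (gaussLogLik τ y ϑ) := by unfold gaussLogLik; fun_prop
  refine Integrable.of_bound hcont.aestronglyMeasurable 1 (Eventually.of_forall fun ϑ => ?_)
  rw [norm_of_nonneg (exp_pos _).le]
  exact exp_le_one_iff.2 (gaussLogLik_nonpos τ y ϑ)

lemma gaussLogLik_sub_gaussLogLik_left (τ τ' : ℝ) (y ϑ : E) :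
    gaussLogLik τ y ϑ - gaussLogLik τ' y ϑ = ‖y - ϑ‖ ^ 2 * ((2 * τ' ^ 2)⁻¹ - (2 * τ ^ 2)⁻¹) := by
  rw [gaussLogLik, gaussLogLik]
  ring

end Seminormed

variable [NormedAddCommGroup E] [InnerProductSpace ℝ E]

lemma gaussLogLik_sub_gaussLogLik_right_sub (τ : ℝ) (p q ϑ : E) :
    gaussLogLik τ p ϑ - gaussLogLik τ q ϑ - (‖q‖ ^ 2 - ‖p‖ ^ 2) / (2 * τ ^ 2) =
      inner ℝ (p - q) ϑ / τ ^ 2 := by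
  rw [gaussLogLik, gaussLogLik, norm_sub_sq_real, norm_sub_sq_real, inner_sub_left]
  ring

lemma abs_gaussLogLik_sub_gaussLogLik_right_sub_le (τ : ℝ) (p q ϑ : E) :
    |gaussLogLik τ p ϑ - gaussLogLik τ q ϑ - (‖q‖ ^ 2 - ‖p‖ ^ 2) / (2 * τ ^ 2)| ≤
      ‖ϑ‖ * ‖p - q‖ / τ ^ 2 := by
  rw [gaussLogLik_sub_gaussLogLik_right_sub, abs_div, abs_of_nonneg (sq_nonneg τ), mul_comm]
  gcongr
  exact abs_real_inner_le_norm _ _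

end Gaussian

section GaussianRisk

variable {E ι : Type*} [NormedAddCommGroup E] [MeasurableSpace E] [OpensMeasurableSpace E]
  {μ : Measure E} [IsFiniteMeasure μ] [NeZero μ] {ℓ : ι → E → ℝ} {S B : ℝ}

lemma gibbsRisk_gaussLogLik_le_exp_mul_norm_sub [InnerProductSpace ℝ E] (hℓ0 : ∀ i, 0 ≤ᵐ[μ] ℓ i)
    (hℓ : ∀ i, MemLp (ℓ i) ∞ μ) (hμ : ∀ᵐ ϑ ∂μ, ‖ϑ‖ ≤ S) (τ : ℝ) (p q : E) :
    gibbsRisk μ ℓ (gaussLogLik τ p) ≤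
      exp (2 * (S * ‖p - q‖ / τ ^ 2)) * gibbsRisk μ ℓ (gaussLogLik τ q) :=
  gibbsRisk_le_exp_mul hℓ0 hℓ (integrable_exp_gaussLogLik τ p) (integrable_exp_gaussLogLik τ q)
    (hμ.mono fun ϑ hϑ => (abs_gaussLogLik_sub_gaussLogLik_right_sub_le τ p q ϑ).trans (by gcongr))

lemma gibbsRisk_gaussLogLik_le_exp_mul_abs_sub (hℓ0 : ∀ i, 0 ≤ᵐ[μ] ℓ i)
    (hℓ : ∀ i, MemLp (ℓ i) ∞ μ) (hμ : ∀ᵐ ϑ ∂μ, ‖ϑ‖ ≤ S) (τ τ' : ℝ) (y : E) :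
    gibbsRisk μ ℓ (gaussLogLik τ y) ≤
      exp (2 * ((‖y‖ + S) ^ 2 * |(2 * τ' ^ 2)⁻¹ - (2 * τ ^ 2)⁻¹|)) *
        gibbsRisk μ ℓ (gaussLogLik τ' y) := by
  refine gibbsRisk_le_exp_mul (c := 0) hℓ0 hℓ (integrable_exp_gaussLogLik τ y)
    (integrable_exp_gaussLogLik τ' y) (hμ.mono fun ϑ hϑ => ?_)
  rw [sub_zero, gaussLogLik_sub_gaussLogLik_left, abs_mul, abs_of_nonneg (sq_nonneg _)]
  gcongr
  exact (norm_sub_le y ϑ).trans (by gcongr)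

lemma abs_gibbsRisk_gaussLogLik_sub_le_right [InnerProductSpace ℝ E] (hℓ0 : ∀ i, 0 ≤ᵐ[μ] ℓ i)
    (hℓ : ∀ i, MemLp (ℓ i) ∞ μ) (hμ : ∀ᵐ ϑ ∂μ, ‖ϑ‖ ≤ S)
    (hB : ∀ τ y, gibbsRisk μ ℓ (gaussLogLik τ y) ≤ B) (τ : ℝ) (p q : E) :
    |gibbsRisk μ ℓ (gaussLogLik τ p) - gibbsRisk μ ℓ (gaussLogLik τ q)| ≤
      2 * (S * ‖p - q‖ / τ ^ 2) * B := by
  obtain ⟨ϑ, hϑ⟩ := hμ.exists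
  have hS : 0 ≤ S := (norm_nonneg ϑ).trans hϑ
  refine abs_sub_le_mul_of_le_exp_mul (gibbsRisk_nonneg hℓ0 _) (gibbsRisk_nonneg hℓ0 _)
    (hB τ p) (hB τ q) (by positivity)
    (gibbsRisk_gaussLogLik_le_exp_mul_norm_sub hℓ0 hℓ hμ τ p q) ?_
  simpa only [norm_sub_rev] using gibbsRisk_gaussLogLik_le_exp_mul_norm_sub hℓ0 hℓ hμ τ q p

lemma abs_gibbsRisk_gaussLogLik_sub_le_left (hℓ0 : ∀ i, 0 ≤ᵐ[μ] ℓ i)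
    (hℓ : ∀ i, MemLp (ℓ i) ∞ μ) (hμ : ∀ᵐ ϑ ∂μ, ‖ϑ‖ ≤ S)
    (hB : ∀ τ y, gibbsRisk μ ℓ (gaussLogLik τ y) ≤ B) (τ τ' : ℝ) (y : E) :
    |gibbsRisk μ ℓ (gaussLogLik τ y) - gibbsRisk μ ℓ (gaussLogLik τ' y)| ≤
      2 * ((‖y‖ + S) ^ 2 * |(2 * τ' ^ 2)⁻¹ - (2 * τ ^ 2)⁻¹|) * B := by
  refine abs_sub_le_mul_of_le_exp_mul (gibbsRisk_nonneg hℓ0 _) (gibbsRisk_nonneg hℓ0 _)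
    (hB τ y) (hB τ' y) (by positivity)
    (gibbsRisk_gaussLogLik_le_exp_mul_abs_sub hℓ0 hℓ hμ τ τ' y) ?_
  simpa only [abs_sub_comm] using gibbsRisk_gaussLogLik_le_exp_mul_abs_sub hℓ0 hℓ hμ τ' τ y

lemma continuousAt_gibbsRisk_gaussLogLik [InnerProductSpace ℝ E] (hℓ0 : ∀ i, 0 ≤ᵐ[μ] ℓ i)
    (hℓ : ∀ i, MemLp (ℓ i) ∞ μ) (hμ : ∀ᵐ ϑ ∂μ, ‖ϑ‖ ≤ S)
    (hB : ∀ τ y, gibbsRisk μ ℓ (gaussLogLik τ y) ≤ B) {p₀ : E × ℝ} (hp₀ : p₀.2 ≠ 0) :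
    ContinuousAt (fun p : E × ℝ => gibbsRisk μ ℓ (gaussLogLik p.2 p.1)) p₀ := by
  set G : E × ℝ → ℝ := fun p => 2 * (S * ‖p.1 - p₀.1‖ / p.2 ^ 2) * B +
    2 * ((‖p₀.1‖ + S) ^ 2 * |(2 * p₀.2 ^ 2)⁻¹ - (2 * p.2 ^ 2)⁻¹|) * B
  have hG : Tendsto G (𝓝 p₀) (𝓝 0) := by
    have hGc : ContinuousAt G p₀ := by fun_prop (disch := simp [hp₀])
    simpa [G] using hGc.tendsto
  rw [ContinuousAt, tendsto_iff_norm_sub_tendsto_zero]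
  refine squeeze_zero (fun _ => norm_nonneg _) (fun p => ?_) hG
  exact (abs_sub_le _ (gibbsRisk μ ℓ (gaussLogLik p.2 p₀.1)) _).trans (add_le_add
    (abs_gibbsRisk_gaussLogLik_sub_le_right hℓ0 hℓ hμ hB p.2 p.1 p₀.1)
    (abs_gibbsRisk_gaussLogLik_sub_le_left hℓ0 hℓ hμ hB p.2 p₀.2 p₀.1))

end GaussianRisk

theorem stmt_7_general {k : ℕ}
    (ℓ : EuclideanSpace ℝ (Fin k) → EuclideanSpace ℝ (Fin k) → ℝ) (C : ℝ)
    (hℓmeas : Measurable fun z : EuclideanSpace ℝ (Fin k) × EuclideanSpace ℝ (Fin k) =>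
      ℓ z.1 z.2)
    (hℓnonneg : ∀ ϑ d, 0 ≤ ℓ ϑ d)
    (hℓPL : ∀ (ϑ d ϑ' d' : EuclideanSpace ℝ (Fin k)),
      |ℓ ϑ d - ℓ ϑ' d'| ≤ C * (1 + ‖(ϑ, d)‖ + ‖(ϑ', d')‖) * ‖(ϑ - ϑ', d - d')‖)
    (K : ℝ) (hK : 0 < K) (M : ℝ≥0∞)
    (κ : ProbabilityTheory.Kernel (EuclideanSpace ℝ (Fin k)) (EuclideanSpace ℝ (Fin k)))
    [ProbabilityTheory.IsMarkovKernel κ]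
    (hκsupp : ∀ v, ∀ᵐ ϑ ∂(κ v), ∀ i, |ϑ i| ≤ K)
    (R : EuclideanSpace ℝ (Fin k) → ℝ → EuclideanSpace ℝ (Fin k) → ℝ)
    (hR : ∀ y τ v, R y τ v =
      ⨅ d : {d : EuclideanSpace ℝ (Fin k) // ∀ i, ENNReal.ofReal |d i| ≤ M},
        (∫ ϑ, ℓ ϑ d.1 * Real.exp (-‖y - ϑ‖ ^ 2 / (2 * τ ^ 2)) ∂(κ v)) /
          (∫ ϑ, Real.exp (-‖y - ϑ‖ ^ 2 / (2 * τ ^ 2)) ∂(κ v)))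
    (Rbar : ℝ)
    (hRbar : Rbar = sSup {r : ℝ | ∃ ϑ : EuclideanSpace ℝ (Fin k),
      (∀ i, |ϑ i| ≤ K) ∧ r = ℓ ϑ 0}) :
    (∀ y τ v, 0 < τ → R y τ v ≤ Rbar) ∧
    (∀ v, ContinuousOn (fun yt : EuclideanSpace ℝ (Fin k) × ℝ => R yt.1 yt.2 v)
      (Set.univ ×ˢ Set.Ioi (0 : ℝ))) ∧
    (∀ τ v, 0 < τ → ∀ y y',
      |R y τ v - R y' τ v| ≤ 2 * K * Real.sqrt k * Rbar / τ ^ 2 * ‖y - y'‖) := by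
  set S := K * √k
  have hsupp : ∀ v, ∀ᵐ ϑ ∂(κ v), ‖ϑ‖ ≤ S := fun v =>
    (hκsupp v).mono fun _ => EuclideanSpace.norm_le_mul_sqrt_of_abs_le hK.le
  have hPL : ∀ z z' : EuclideanSpace ℝ (Fin k) × EuclideanSpace ℝ (Fin k),
      |ℓ z.1 z.2 - ℓ z'.1 z'.2| ≤ C * (1 + ‖z‖ + ‖z'‖) * ‖z - z'‖ :=
    fun z z' => hℓPL z.1 z.2 z'.1 z'.2
  set L := fun (d : {d : EuclideanSpace ℝ (Fin k) // ∀ i, ENNReal.ofReal |d i| ≤ M}) ϑ =>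
    ℓ ϑ d.1
  have hL0 : ∀ v d, 0 ≤ᵐ[κ v] L d := fun v d => ae_of_all _ fun ϑ => hℓnonneg ϑ d.1
  have hL : ∀ v d, MemLp (L d) ∞ (κ v) := fun v d =>
    memLp_top_of_pseudoLipschitz hℓmeas hPL (hsupp v) d.1
  have hR' : ∀ y τ v, R y τ v = gibbsRisk (κ v) L (gaussLogLik τ y) := hR
  have hbdd : BddAbove {r : ℝ | ∃ ϑ : EuclideanSpace ℝ (Fin k),
      (∀ i, |ϑ i| ≤ K) ∧ r = ℓ ϑ 0} := by
    refine ⟨|ℓ 0 0| + |C| * (1 + S) * S, ?_⟩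
    rintro _ ⟨ϑ, hϑ, rfl⟩
    refine (le_abs_self _).trans (abs_le_of_pseudoLipschitz hPL (x := (ϑ, 0)) ?_)
    simpa using EuclideanSpace.norm_le_mul_sqrt_of_abs_le hK.le hϑ
  have hB : ∀ v τ y, gibbsRisk (κ v) L (gaussLogLik τ y) ≤ Rbar := fun v τ y =>
    gibbsRisk_le_of_ae_le (i := ⟨0, fun i => by simp⟩) (hL0 v) (hL v _)
      (integrable_exp_gaussLogLik τ y)
      ((hκsupp v).mono fun ϑ hϑ => hRbar ▸ le_csSup hbdd ⟨ϑ, hϑ, rfl⟩)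
  refine ⟨fun y τ v _ => hR' y τ v ▸ hB v τ y, fun v p hp => ?_, fun τ v _ y y' => ?_⟩
  · simp only [hR']
    exact (continuousAt_gibbsRisk_gaussLogLik (hL0 v) (hL v) (hsupp v) (hB v)
      (ne_of_gt hp.2)).continuousWithinAt
  · calc |R y τ v - R y' τ v| ≤ 2 * (S * ‖y - y'‖ / τ ^ 2) * Rbar := by
          rw [hR', hR']
          exact abs_gibbsRisk_gaussLogLik_sub_le_right (hL0 v) (hL v) (hsupp v) (hB v) τ y y'
      _ = 2 * K * √k * Rbar / τ ^ 2 * ‖y - y'‖ := by ring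

/-- Properties of the posterior Bayes risk for a quadratically-bounded loss and a
prior kernel supported in `[-K, K]^k` (finite `K`): `R(y, τ, v, K, M)` is bounded by
`R̄(K) = sup_{‖ϑ‖_∞ ≤ K} ℓ(ϑ, 0)`, the map `(y, τ) ↦ R(y, τ, v, K, M)` is continuous on
`ℝ^k × ℝ_{>0}`, and `y ↦ R(y, τ, v, K, M)` is Lipschitz with constant
`2K√k R̄(K)/τ²`. -/
theorem stmt_7 {k : ℕ}
    (ℓ : EuclideanSpace ℝ (Fin k) → EuclideanSpace ℝ (Fin k) → ℝ) (C : ℝ)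
    (hℓmeas : Measurable fun z : EuclideanSpace ℝ (Fin k) × EuclideanSpace ℝ (Fin k) =>
      ℓ z.1 z.2)
    (hℓnonneg : ∀ ϑ d, 0 ≤ ℓ ϑ d)
    (hℓPL : ∀ (ϑ d ϑ' d' : EuclideanSpace ℝ (Fin k)),
      |ℓ ϑ d - ℓ ϑ' d'| ≤ C * (1 + ‖(ϑ, d)‖ + ‖(ϑ', d')‖) * ‖(ϑ - ϑ', d - d')‖)
    (hℓgrowth : ∀ ϑ ϑ' d, |ℓ ϑ d - ℓ ϑ' d| ≤
      C * (1 + Real.sqrt (ℓ ϑ d) + Real.sqrt (ℓ ϑ' d)) * ‖ϑ - ϑ'‖)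
    (K : ℝ) (hK : 0 < K) (M : ℝ≥0∞) (hM : 0 < M)
    (κ : ProbabilityTheory.Kernel (EuclideanSpace ℝ (Fin k)) (EuclideanSpace ℝ (Fin k)))
    [ProbabilityTheory.IsMarkovKernel κ]
    (hκsupp : ∀ v, ∀ᵐ ϑ ∂(κ v), ∀ i, |ϑ i| ≤ K)
    (R : EuclideanSpace ℝ (Fin k) → ℝ → EuclideanSpace ℝ (Fin k) → ℝ)
    (hR : ∀ y τ v, R y τ v =
      ⨅ d : {d : EuclideanSpace ℝ (Fin k) // ∀ i, ENNReal.ofReal |d i| ≤ M},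
        (∫ ϑ, ℓ ϑ d.1 * Real.exp (-‖y - ϑ‖ ^ 2 / (2 * τ ^ 2)) ∂(κ v)) /
          (∫ ϑ, Real.exp (-‖y - ϑ‖ ^ 2 / (2 * τ ^ 2)) ∂(κ v)))
    (Rbar : ℝ)
    (hRbar : Rbar = sSup {r : ℝ | ∃ ϑ : EuclideanSpace ℝ (Fin k),
      (∀ i, |ϑ i| ≤ K) ∧ r = ℓ ϑ 0}) :
    (∀ y τ v, 0 < τ → R y τ v ≤ Rbar) ∧
    (∀ v, ContinuousOn (fun yt : EuclideanSpace ℝ (Fin k) × ℝ => R yt.1 yt.2 v)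
      (Set.univ ×ˢ Set.Ioi (0 : ℝ))) ∧
    (∀ τ v, 0 < τ → ∀ y y',
      |R y τ v - R y' τ v| ≤ 2 * K * Real.sqrt k * Rbar / τ ^ 2 * ‖y - y'‖) :=
  stmt_7_general ℓ C hℓmeas hℓnonneg hℓPL K hK M κ hκsupp R hR Rbar hRbar
end

section
/- If ℓ : ℝ^k × ℝ^k → ℝ_{≥0} is a non-negative function satisfying |ℓ(ϑ,d) - ℓ(ϑ',d)| ≤ C(1 + √ℓ(ϑ,d) + √ℓ(ϑ',d))‖ϑ - ϑ'‖ for all ϑ, ϑ', d, and if ℓ(ϑ*, d) ≤ r for some ϑ* and r ≥ 0, then for all ϑ we have ℓ(ϑ, d) ≤ (1 + √r + 3C‖ϑ - ϑ*‖)². -/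
/-! Put `a = √ℓ(ϑ,d)`, `b = √ℓ(ϑ*,d)` and `K = C‖ϑ - ϑ*‖`. The growth condition reads
`a² - b² ≤ K(1 + a + b)`, and if `a > 1 + b + K` then `a² - b² = (a - b)(a + b) > (1 + K)(a + b)`,
which exceeds `K(1 + a + b)` because `a > K`. Hence `√ℓ(ϑ,d) ≤ 1 + √r + C‖ϑ - ϑ*‖`. -/

open Real

lemma le_one_add_add_of_sq_le_sq_add {a b K : ℝ} (ha : 0 ≤ a) (hb : 0 ≤ b)
    (h : a ^ 2 ≤ b ^ 2 + K * (1 + a + b)) : a ≤ 1 + b + K := by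
  by_contra! hlt
  nlinarith [mul_le_mul_of_nonneg_right hlt.le (add_nonneg ha hb)]

lemma sqrt_le_one_add_sqrt_add_mul_norm_sub {E : Type*} [SeminormedAddCommGroup E] {f : E → ℝ}
    {C : ℝ} (hf : ∀ x, 0 ≤ f x)
    (hgrowth : ∀ x y, |f x - f y| ≤ C * (1 + √(f x) + √(f y)) * ‖x - y‖) (x y : E) :
    √(f x) ≤ 1 + √(f y) + C * ‖x - y‖ := by
  refine le_one_add_add_of_sq_le_sq_add (sqrt_nonneg _) (sqrt_nonneg _) ?_
  rw [sq_sqrt (hf x), sq_sqrt (hf y)]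
  linarith [(abs_le.mp (hgrowth x y)).2]

theorem stmt_8_general {k : ℕ} (ℓ : EuclideanSpace ℝ (Fin k) → EuclideanSpace ℝ (Fin k) → ℝ)
    (C : ℝ) (hC : 0 ≤ C)
    (hnonneg : ∀ ϑ d, 0 ≤ ℓ ϑ d)
    (hgrowth : ∀ ϑ ϑ' d, |ℓ ϑ d - ℓ ϑ' d| ≤
      C * (1 + Real.sqrt (ℓ ϑ d) + Real.sqrt (ℓ ϑ' d)) * ‖ϑ - ϑ'‖)
    (ϑstar d : EuclideanSpace ℝ (Fin k)) (r : ℝ)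
    (hr : ℓ ϑstar d ≤ r) :
    ∀ ϑ, ℓ ϑ d ≤ (1 + Real.sqrt r + 3 * C * ‖ϑ - ϑstar‖) ^ 2 := by
  intro ϑ
  have hsqrt : √(ℓ ϑ d) ≤ 1 + √r + 3 * C * ‖ϑ - ϑstar‖ := calc
    √(ℓ ϑ d) ≤ 1 + √(ℓ ϑstar d) + C * ‖ϑ - ϑstar‖ :=
      sqrt_le_one_add_sqrt_add_mul_norm_sub (hnonneg · d) (hgrowth · · d) ϑ ϑstar
    _ ≤ 1 + √r + 3 * C * ‖ϑ - ϑstar‖ := by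
      gcongr
      linarith [mul_nonneg hC (norm_nonneg (ϑ - ϑstar))]
  calc ℓ ϑ d = √(ℓ ϑ d) ^ 2 := (sq_sqrt (hnonneg ϑ d)).symm
    _ ≤ _ := pow_le_pow_left₀ (sqrt_nonneg _) hsqrt 2

/-- If a non-negative loss `ℓ` satisfies the self-bounding growth condition
`|ℓ(ϑ,d) - ℓ(ϑ',d)| ≤ C(1 + √ℓ(ϑ,d) + √ℓ(ϑ',d))‖ϑ - ϑ'‖` and `ℓ(ϑ*, d) ≤ r`,
then `ℓ(ϑ, d) ≤ (1 + √r + 3C‖ϑ - ϑ*‖)²` for all `ϑ`. -/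
theorem stmt_8 {k : ℕ} (ℓ : EuclideanSpace ℝ (Fin k) → EuclideanSpace ℝ (Fin k) → ℝ)
    (C : ℝ) (hC : 0 ≤ C)
    (hnonneg : ∀ ϑ d, 0 ≤ ℓ ϑ d)
    (hgrowth : ∀ ϑ ϑ' d, |ℓ ϑ d - ℓ ϑ' d| ≤
      C * (1 + Real.sqrt (ℓ ϑ d) + Real.sqrt (ℓ ϑ' d)) * ‖ϑ - ϑ'‖)
    (ϑstar d : EuclideanSpace ℝ (Fin k)) (r : ℝ) (hr0 : 0 ≤ r)
    (hr : ℓ ϑstar d ≤ r) :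
    ∀ ϑ, ℓ ϑ d ≤ (1 + Real.sqrt r + 3 * C * ‖ϑ - ϑstar‖) ^ 2 :=
  stmt_8_general ℓ C hC hnonneg hgrowth ϑstar d r hr
end

section
/- Let Θ₀ take values ±μ with probability ε/2 each and 0 with probability 1-ε, and let G ∼ N(0,1) be independent. Define V_±(q) = E[E[√δ·Θ₀ | √(δq)·Θ₀ + G]²]/δ. Then V_±(q) ≤ (μ²ε²/(1-ε))·sinh(δqμ²), and V_±(q) = μ⁴ε²δ·q + O(q²) as q → 0. -/
/-!
Observing `Y = aΘ + G` reweights the prior by the Gaussian likelihood ratio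
`exp (aθy - (aθ)²/2)` with respect to `N(0,1)`. For the three-point prior this gives, with
`b = aμ`, the marginal density `D(y) = 1 - ε + ε e^{-b²/2} cosh (by)` of `Y` and the posterior
mean `μ ε e^{-b²/2} sinh (by) / D(y)`, hence
`E[E[Θ | Y]²] = μ² ε² e^{-b²} E[sinh (bG)² / D(G)]`.
Since `D ≥ 1 - ε + ε e^{-b²/2} ≥ 1 - ε` and `E[sinh (bG)²] = e^{b²} sinh (b²)`, this is at most
`μ² ε² sinh (b²) / (1 - ε)`. For the expansion, `1 / D ≥ 2 - D` turns the lower bound into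
Gaussian exponential moments as well; both bounds are `b² + O(b⁴)` with `b² = δqμ²`.
-/

open MeasureTheory ProbabilityTheory Asymptotics
open scoped ProbabilityTheory

open Real

namespace Real

theorem sinh_sq_eq_cosh_two_mul (x : ℝ) : sinh x ^ 2 = (cosh (2 * x) - 1) / 2 := by
  rw [cosh_two_mul, cosh_sq]; ring

theorem sinh_sq_mul_cosh_eq_cosh_three_mul (x : ℝ) :
    sinh x ^ 2 * cosh x = (cosh (3 * x) - cosh x) / 4 := by
  rw [cosh_three_mul, sinh_sq]; ring

theorem exp_le_one_add_add_sq {x : ℝ} (hx : |x| ≤ 1) : exp x ≤ 1 + x + x ^ 2 := by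
  linarith [(abs_le.1 (abs_exp_sub_one_sub_id_le hx)).2]

end Real

namespace ProbabilityTheory

theorem integral_exp_mul_gaussianReal (c : ℝ) :
    ∫ x, exp (c * x) ∂gaussianReal 0 1 = exp (c ^ 2 / 2) := by
  simpa [mgf] using congrFun (mgf_id_gaussianReal (μ := 0) (v := 1)) c

theorem integrable_cosh_mul_gaussianReal (c : ℝ) :
    Integrable (fun x ↦ cosh (c * x)) (gaussianReal 0 1) := by
  simp_rw [cosh_eq, ← neg_mul]
  exact ((integrable_exp_mul_gaussianReal c).add (integrable_exp_mul_gaussianReal (-c))).div_const 2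

theorem integral_cosh_mul_gaussianReal (c : ℝ) :
    ∫ x, cosh (c * x) ∂gaussianReal 0 1 = exp (c ^ 2 / 2) := by
  simp_rw [cosh_eq, ← neg_mul]
  rw [integral_div, integral_add (integrable_exp_mul_gaussianReal c)
    (integrable_exp_mul_gaussianReal (-c)), integral_exp_mul_gaussianReal,
    integral_exp_mul_gaussianReal, neg_sq]
  ring

theorem integral_sinh_sq_gaussianReal (b : ℝ) :
    ∫ x, sinh (b * x) ^ 2 ∂gaussianReal 0 1 = (exp (2 * b ^ 2) - 1) / 2 := by
  simp_rw [sinh_sq_eq_cosh_two_mul, ← mul_assoc]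
  rw [integral_div, integral_sub (integrable_cosh_mul_gaussianReal _) (integrable_const 1),
    integral_cosh_mul_gaussianReal]
  simp only [integral_const, probReal_univ, smul_eq_mul, one_mul]
  ring_nf

theorem integral_sinh_sq_mul_cosh_gaussianReal (b : ℝ) :
    ∫ x, sinh (b * x) ^ 2 * cosh (b * x) ∂gaussianReal 0 1 =
      (exp (9 * b ^ 2 / 2) - exp (b ^ 2 / 2)) / 4 := by
  simp_rw [sinh_sq_mul_cosh_eq_cosh_three_mul, ← mul_assoc]
  rw [integral_div, integral_sub (integrable_cosh_mul_gaussianReal _)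
    (integrable_cosh_mul_gaussianReal _), integral_cosh_mul_gaussianReal,
    integral_cosh_mul_gaussianReal]
  ring_nf

theorem integrable_sinh_sq_gaussianReal (b : ℝ) :
    Integrable (fun x ↦ sinh (b * x) ^ 2) (gaussianReal 0 1) := by
  simp_rw [sinh_sq_eq_cosh_two_mul, ← mul_assoc]
  exact ((integrable_cosh_mul_gaussianReal _).sub (integrable_const 1)).div_const 2

theorem integrable_sinh_sq_mul_cosh_gaussianReal (b : ℝ) :
    Integrable (fun x ↦ sinh (b * x) ^ 2 * cosh (b * x)) (gaussianReal 0 1) := by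
  simp_rw [sinh_sq_mul_cosh_eq_cosh_three_mul, ← mul_assoc]
  exact ((integrable_cosh_mul_gaussianReal _).sub
    (integrable_cosh_mul_gaussianReal _)).div_const 4

theorem gaussianPDFReal_eq_mul_exp (c x : ℝ) :
    gaussianPDFReal c 1 x = exp (c * x - c ^ 2 / 2) * gaussianPDFReal 0 1 x := by
  simp only [gaussianPDFReal, NNReal.coe_one, mul_one, sub_zero]
  rw [mul_left_comm, ← exp_add]
  ring_nf

/-- Cameron–Martin: `exp (c * x - c ^ 2 / 2)` is the density of `N(c, 1)` with respect to
`N(0, 1)`. -/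
theorem integral_const_add_gaussianReal (c : ℝ) (h : ℝ → ℝ) :
    ∫ x, h (c + x) ∂gaussianReal 0 1 = ∫ x, exp (c * x - c ^ 2 / 2) * h x ∂gaussianReal 0 1 := by
  have hmap : (gaussianReal 0 1).map (MeasurableEquiv.addLeft c) = gaussianReal c 1 := by
    simpa using gaussianReal_map_const_add (μ := 0) (v := 1) c
  have hshift : ∫ x, h (c + x) ∂gaussianReal 0 1 = ∫ x, h x ∂gaussianReal c 1 := by
    rw [← hmap, integral_map_equiv]; rfl
  rw [hshift, integral_gaussianReal_eq_integral_smul one_ne_zero,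
    integral_gaussianReal_eq_integral_smul one_ne_zero]
  simp_rw [gaussianPDFReal_eq_mul_exp c, smul_eq_mul]
  congr 1 with x
  ring

theorem integrable_exp_mul_sub_gaussianReal (c : ℝ) :
    Integrable (fun x ↦ exp (c * x - c ^ 2 / 2)) (gaussianReal 0 1) := by
  simp_rw [exp_sub]
  exact (integrable_exp_mul_gaussianReal c).div_const _

theorem IndepFun.integral_comp_eq_integral_integral {Ω α β : Type*} [MeasurableSpace Ω]
    [MeasurableSpace α] [MeasurableSpace β] {P : Measure Ω} [IsFiniteMeasure P] {X : Ω → α}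
    {Y : Ω → β} (hX : Measurable X) (hY : Measurable Y) (hXY : IndepFun X Y P) {f : α → β → ℝ}
    (hf : Integrable (Function.uncurry f) ((P.map X).prod (P.map Y))) :
    ∫ ω, f (X ω) (Y ω) ∂P = ∫ x, ∫ y, f x y ∂P.map Y ∂P.map X := by
  have hprod := integral_prod _ hf
  simp only [Function.uncurry_apply_pair] at hprod
  rw [← hprod, ← hXY.map_prod_eq_prod_map_map hX.aemeasurable hY.aemeasurable,
    integral_map (hX.prodMk hY).aemeasurable]
  · rfl
  · rw [hXY.map_prod_eq_prod_map_map hX.aemeasurable hY.aemeasurable]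
    exact hf.aestronglyMeasurable

end ProbabilityTheory

namespace ThreePointPrior

noncomputable def threePoint (ε μ : ℝ) : Measure ℝ :=
  ENNReal.ofReal (1 - ε) • Measure.dirac 0 + ENNReal.ofReal (ε / 2) • Measure.dirac μ +
    ENNReal.ofReal (ε / 2) • Measure.dirac (-μ)

instance (ε μ : ℝ) : IsFiniteMeasure (threePoint ε μ) := by
  constructor
  simp [threePoint]

theorem integrable_ofReal_smul_dirac (c a : ℝ) (f : ℝ → ℝ) :
    Integrable f (ENNReal.ofReal c • Measure.dirac a) :=
  (integrable_dirac enorm_lt_top).smul_measure ENNReal.ofReal_ne_top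

theorem integrable_threePoint (ε μ : ℝ) (f : ℝ → ℝ) : Integrable f (threePoint ε μ) :=
  ((integrable_ofReal_smul_dirac _ _ f).add_measure
    (integrable_ofReal_smul_dirac _ _ f)).add_measure (integrable_ofReal_smul_dirac _ _ f)

theorem integral_threePoint {ε : ℝ} (hε0 : 0 ≤ ε) (hε1 : ε ≤ 1) (μ : ℝ) (f : ℝ → ℝ) :
    ∫ θ, f θ ∂threePoint ε μ = (1 - ε) * f 0 + ε / 2 * f μ + ε / 2 * f (-μ) := by
  rw [threePoint, integral_add_measure ((integrable_ofReal_smul_dirac _ _ f).add_measure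
      (integrable_ofReal_smul_dirac _ _ f)) (integrable_ofReal_smul_dirac _ _ f),
    integral_add_measure (integrable_ofReal_smul_dirac _ _ f) (integrable_ofReal_smul_dirac _ _ f)]
  simp only [integral_smul_measure, integral_dirac, smul_eq_mul]
  rw [ENNReal.toReal_ofReal (by linarith), ENNReal.toReal_ofReal (by linarith)]

theorem integrable_threePoint_prod {ε μ : ℝ} {ν : Measure ℝ} [SFinite ν] {f : ℝ × ℝ → ℝ}
    (hf : Measurable f) (hslice : ∀ θ, Integrable (fun y ↦ f (θ, y)) ν) :
    Integrable f ((threePoint ε μ).prod ν) :=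
  (integrable_prod_iff hf.aestronglyMeasurable).2
    ⟨ae_of_all _ hslice, integrable_threePoint ε μ _⟩

noncomputable def evidence (ε b y : ℝ) : ℝ := 1 - ε + ε * exp (-(b ^ 2 / 2)) * cosh (b * y)

noncomputable def posteriorMean (ε μ b y : ℝ) : ℝ :=
  μ * ε * exp (-(b ^ 2 / 2)) * sinh (b * y) / evidence ε b y

section Pointwise

variable {ε : ℝ}

theorem le_evidence (hε0 : 0 ≤ ε) (b y : ℝ) :
    1 - ε + ε * exp (-(b ^ 2 / 2)) ≤ evidence ε b y := by
  have := mul_le_mul_of_nonneg_left (one_le_cosh (b * y))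
    (by positivity : 0 ≤ ε * exp (-(b ^ 2 / 2)))
  rw [evidence]
  linarith

theorem evidence_pos (hε0 : 0 ≤ ε) (hε1 : ε < 1) (b y : ℝ) : 0 < evidence ε b y :=
  (by positivity : 0 < 1 - ε + ε * exp (-(b ^ 2 / 2))).trans_le (le_evidence hε0 b y)

theorem abs_posteriorMean_le (hε0 : 0 ≤ ε) (hε1 : ε < 1) (μ b y : ℝ) :
    |posteriorMean ε μ b y| ≤ |μ| := by
  have hD := evidence_pos hε0 hε1 b y
  have hsinh : |sinh (b * y)| ≤ cosh (b * y) := by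
    rw [abs_sinh, ← cosh_abs (b * y)]; exact (sinh_lt_cosh _).le
  rw [posteriorMean, abs_div, abs_of_pos hD, div_le_iff₀ hD, abs_mul, abs_mul, abs_mul,
    abs_of_nonneg hε0, abs_of_pos (exp_pos _), evidence]
  have := mul_le_mul_of_nonneg_left hsinh (by positivity : 0 ≤ |μ| * ε * exp (-(b ^ 2 / 2)))
  nlinarith [abs_nonneg μ]

@[fun_prop]
theorem measurable_posteriorMean (ε μ b : ℝ) : Measurable (posteriorMean ε μ b) := by
  unfold posteriorMean evidence; fun_prop

theorem integral_likelihood_threePoint (hε0 : 0 ≤ ε) (hε1 : ε ≤ 1) (μ a y : ℝ) :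
    ∫ θ, exp (a * θ * y - (a * θ) ^ 2 / 2) ∂threePoint ε μ = evidence ε (a * μ) y := by
  rw [integral_threePoint hε0 hε1, evidence, cosh_eq]
  simp only [mul_zero, zero_mul, zero_pow two_ne_zero, zero_div, neg_zero, add_zero, exp_zero,
    mul_neg, neg_mul, neg_sq, sub_eq_add_neg, exp_add]
  ring

theorem integral_mul_likelihood_threePoint (hε0 : 0 ≤ ε) (hε1 : ε < 1) (μ a y : ℝ) :
    ∫ θ, exp (a * θ * y - (a * θ) ^ 2 / 2) * θ ∂threePoint ε μ =
      evidence ε (a * μ) y * posteriorMean ε μ (a * μ) y := by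
  rw [integral_threePoint hε0 hε1.le, posteriorMean,
    mul_div_cancel₀ _ (evidence_pos hε0 hε1 _ _).ne', sinh_eq]
  simp only [mul_zero, zero_mul, zero_pow two_ne_zero, zero_div, neg_zero, add_zero, exp_zero,
    mul_neg, neg_mul, neg_sq, sub_eq_add_neg, exp_add]
  ring

theorem evidence_mul_posteriorMean_sq (hε0 : 0 ≤ ε) (hε1 : ε < 1) (μ b y : ℝ) :
    evidence ε b y * posteriorMean ε μ b y ^ 2 =
      μ ^ 2 * ε ^ 2 * exp (-b ^ 2) * (sinh (b * y) ^ 2 / evidence ε b y) := by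
  have hD := (evidence_pos hε0 hε1 b y).ne'
  have hexp : exp (-b ^ 2) = exp (-(b ^ 2 / 2)) ^ 2 := by rw [← exp_nat_mul]; ring_nf
  rw [posteriorMean, hexp]
  field_simp

end Pointwise

section Observation

variable {Ω : Type*} [MeasureSpace Ω] [IsProbabilityMeasure (ℙ : Measure Ω)] {ε μ : ℝ}
  {Θ G : Ω → ℝ}

theorem integral_comp_signal_add_noise (hΘ : Measurable Θ) (hG : Measurable G)
    (hΘlaw : Measure.map Θ ℙ = threePoint ε μ) (hGlaw : Measure.map G ℙ = gaussianReal 0 1)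
    (hindep : IndepFun Θ G) (a : ℝ) {F : ℝ → ℝ → ℝ} (hF : Measurable (Function.uncurry F))
    (hFb : ∀ θ, ∃ C, ∀ y, |F θ y| ≤ C) :
    ∫ ω, F (Θ ω) (a * Θ ω + G ω) =
      ∫ y, ∫ θ, exp (a * θ * y - (a * θ) ^ 2 / 2) * F θ y ∂threePoint ε μ ∂gaussianReal 0 1 := by
  have hslice (θ : ℝ) :
      Integrable (fun y ↦ exp (a * θ * y - (a * θ) ^ 2 / 2) * F θ y) (gaussianReal 0 1) := by
    obtain ⟨C, hC⟩ := hFb θ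
    exact (integrable_exp_mul_sub_gaussianReal _).mul_bdd
      (hF.comp measurable_prodMk_left).aestronglyMeasurable (ae_of_all _ hC)
  have hFa : Measurable (Function.uncurry fun θ g ↦ F θ (a * θ + g)) :=
    hF.comp (measurable_fst.prodMk ((measurable_fst.const_mul a).add measurable_snd))
  rw [hindep.integral_comp_eq_integral_integral hΘ hG (f := fun θ g ↦ F θ (a * θ + g)), hΘlaw,
    hGlaw]
  · simp_rw [fun θ ↦ integral_const_add_gaussianReal (a * θ) (F θ)]
    exact integral_integral_swap (integrable_threePoint_prod (by fun_prop) hslice)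
  · rw [hΘlaw, hGlaw]
    refine integrable_threePoint_prod hFa fun θ ↦ ?_
    obtain ⟨C, hC⟩ := hFb θ
    exact .of_bound (hFa.comp measurable_prodMk_left).aestronglyMeasurable C
      (ae_of_all _ fun g ↦ hC _)

theorem condExp_eq_posteriorMean (hε0 : 0 ≤ ε) (hε1 : ε < 1) (hΘ : Measurable Θ)
    (hG : Measurable G) (hΘlaw : Measure.map Θ ℙ = threePoint ε μ)
    (hGlaw : Measure.map G ℙ = gaussianReal 0 1) (hindep : IndepFun Θ G) (a : ℝ) :
    ℙ[Θ | MeasurableSpace.comap (fun ω ↦ a * Θ ω + G ω) inferInstance] =ᵐ[ℙ]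
      fun ω ↦ posteriorMean ε μ (a * μ) (a * Θ ω + G ω) := by
  set Y := fun ω ↦ a * Θ ω + G ω
  have hY : Measurable Y := by fun_prop
  have hφ := measurable_posteriorMean ε μ (a * μ)
  have hφb := abs_posteriorMean_le hε0 hε1 μ (a * μ)
  have hΘint : Integrable Θ ℙ :=
    (integrable_map_measure measurable_id.aestronglyMeasurable hΘ.aemeasurable).1
      (hΘlaw ▸ integrable_threePoint ε μ id)
  refine (ae_eq_condExp_of_forall_setIntegral_eq hY.comap_le hΘint (fun s _ _ ↦ ?_) ?_
    (hφ.comp (Measurable.of_comap_le le_rfl)).aestronglyMeasurable).symm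
  · exact (Integrable.of_bound (hφ.comp hY).aestronglyMeasurable |μ|
      (ae_of_all _ fun ω ↦ hφb _)).integrableOn
  rintro _ ⟨B, hB, rfl⟩ -
  have hindicator (f : Ω → ℝ) (ω : Ω) :
      (Y ⁻¹' B).indicator f ω = f ω * B.indicator 1 (Y ω) := by
    by_cases h : Y ω ∈ B <;> simp [h]
  simp_rw [← integral_indicator (hY hB), hindicator]
  have hbound (c y : ℝ) : |c * B.indicator 1 y| ≤ |c| := by
    by_cases h : y ∈ B <;> simp [h]
  have hL := integral_comp_signal_add_noise hΘ hG hΘlaw hGlaw hindep a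
    (F := fun _ y ↦ posteriorMean ε μ (a * μ) y * B.indicator 1 y) (by fun_prop)
    (fun _ ↦ ⟨|μ|, fun y ↦ (hbound _ y).trans (hφb y)⟩)
  have hR := integral_comp_signal_add_noise hΘ hG hΘlaw hGlaw hindep a
    (F := fun θ y ↦ θ * B.indicator 1 y) (by fun_prop) (fun θ ↦ ⟨|θ|, hbound θ⟩)
  refine (hL.trans (integral_congr_ae (ae_of_all _ fun y ↦ ?_))).trans hR.symm
  simp only [← mul_assoc, integral_mul_const]
  rw [integral_likelihood_threePoint hε0 hε1.le,
    integral_mul_likelihood_threePoint hε0 hε1]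

theorem integral_condExp_sq (hε0 : 0 ≤ ε) (hε1 : ε < 1) (hΘ : Measurable Θ)
    (hG : Measurable G) (hΘlaw : Measure.map Θ ℙ = threePoint ε μ)
    (hGlaw : Measure.map G ℙ = gaussianReal 0 1) (hindep : IndepFun Θ G) (a c : ℝ) :
    ∫ ω, ℙ[fun ω ↦ c * Θ ω | MeasurableSpace.comap (fun ω ↦ a * Θ ω + G ω) inferInstance] ω ^ 2 =
      c ^ 2 * μ ^ 2 * ε ^ 2 * (exp (-(a * μ) ^ 2) *
        ∫ y, sinh (a * μ * y) ^ 2 / evidence ε (a * μ) y ∂gaussianReal 0 1) := by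
  have hce := (condExp_smul c Θ _).trans
    ((condExp_eq_posteriorMean hε0 hε1 hΘ hG hΘlaw hGlaw hindep a).fun_comp (c • ·))
  have hφb := abs_posteriorMean_le hε0 hε1 μ (a * μ)
  refine (integral_congr_ae (hce.mono fun ω hω ↦ congrArg (· ^ 2) hω)).trans ?_
  simp only [Function.comp_apply, smul_eq_mul, mul_pow c]
  rw [integral_const_mul, integral_comp_signal_add_noise hΘ hG hΘlaw hGlaw hindep a
    (F := fun _ y ↦ posteriorMean ε μ (a * μ) y ^ 2)
    (by fun_prop) (fun _ ↦ ⟨μ ^ 2, fun y ↦ ?_⟩)]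
  · simp only [integral_mul_const, integral_likelihood_threePoint hε0 hε1.le,
      evidence_mul_posteriorMean_sq hε0 hε1, integral_const_mul]
    ring
  · rw [abs_pow, ← sq_abs μ]
    exact pow_le_pow_left₀ (abs_nonneg _) (hφb y) 2

end Observation

section Envelopes

variable {ε : ℝ}

noncomputable def upperEnvelope (ε t : ℝ) : ℝ := sinh t / (1 - ε + ε * exp (-(t / 2)))

noncomputable def lowerEnvelope (ε t : ℝ) : ℝ :=
  (1 + ε) * sinh t - ε * (exp (3 * t) - exp (-t)) / 4

theorem upperEnvelope_le (hε0 : 0 ≤ ε) (hε1 : ε < 1) {t : ℝ} (ht : 0 ≤ t) :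
    upperEnvelope ε t ≤ sinh t / (1 - ε) :=
  div_le_div_of_nonneg_left (sinh_nonneg_iff.2 ht) (by linarith)
    (le_add_of_nonneg_right (by positivity))

theorem integrable_sinh_sq_div_evidence (hε0 : 0 ≤ ε) (hε1 : ε < 1) (b : ℝ) :
    Integrable (fun y ↦ sinh (b * y) ^ 2 / evidence ε b y) (gaussianReal 0 1) := by
  refine ((integrable_sinh_sq_gaussianReal b).div_const (1 - ε)).mono'
    (Measurable.aestronglyMeasurable (by unfold evidence; fun_prop)) (ae_of_all _ fun y ↦ ?_)
  rw [Real.norm_eq_abs, abs_of_nonneg (div_nonneg (sq_nonneg _) (evidence_pos hε0 hε1 b y).le)]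
  refine div_le_div_of_nonneg_left (sq_nonneg _) (by linarith) ((le_evidence hε0 b y).trans' ?_)
  have := exp_pos (-(b ^ 2 / 2))
  nlinarith

theorem integral_sinh_sq_div_evidence_le (hε0 : 0 ≤ ε) (hε1 : ε < 1) (b : ℝ) :
    exp (-b ^ 2) * ∫ y, sinh (b * y) ^ 2 / evidence ε b y ∂gaussianReal 0 1 ≤
      upperEnvelope ε (b ^ 2) := by
  set d := 1 - ε + ε * exp (-(b ^ 2 / 2))
  have hd : 0 < d := by positivity
  have hJ : ∫ y, sinh (b * y) ^ 2 / evidence ε b y ∂gaussianReal 0 1 ≤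
      ∫ y, sinh (b * y) ^ 2 / d ∂gaussianReal 0 1 :=
    integral_mono (integrable_sinh_sq_div_evidence hε0 hε1 b)
      ((integrable_sinh_sq_gaussianReal b).div_const d)
      fun y ↦ div_le_div_of_nonneg_left (sq_nonneg _) hd (le_evidence hε0 b y)
  rw [integral_div, integral_sinh_sq_gaussianReal] at hJ
  calc exp (-b ^ 2) * ∫ y, sinh (b * y) ^ 2 / evidence ε b y ∂gaussianReal 0 1
      ≤ exp (-b ^ 2) * ((exp (2 * b ^ 2) - 1) / 2 / d) := by gcongr
    _ = upperEnvelope ε (b ^ 2) := by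
      have h : exp (-b ^ 2) * exp (2 * b ^ 2) = exp (b ^ 2) := by rw [← exp_add]; ring_nf
      rw [upperEnvelope, sinh_eq, ← h]
      ring

theorem lowerEnvelope_le_integral_sinh_sq_div_evidence (hε0 : 0 ≤ ε) (hε1 : ε < 1) (b : ℝ) :
    lowerEnvelope ε (b ^ 2) ≤
      exp (-b ^ 2) * ∫ y, sinh (b * y) ^ 2 / evidence ε b y ∂gaussianReal 0 1 := by
  have hint : Integrable (fun y ↦ (1 + ε) * sinh (b * y) ^ 2 -
      ε * exp (-(b ^ 2 / 2)) * (sinh (b * y) ^ 2 * cosh (b * y))) (gaussianReal 0 1) :=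
    ((integrable_sinh_sq_gaussianReal b).const_mul _).sub
      ((integrable_sinh_sq_mul_cosh_gaussianReal b).const_mul _)
  -- `1 / D ≥ 2 - D` for `D > 0`, and `2 - D` is linear in `cosh`
  have hJ := integral_mono hint (integrable_sinh_sq_div_evidence hε0 hε1 b) fun y ↦ by
    have hD := evidence_pos hε0 hε1 b y
    have hkey : (1 + ε) * sinh (b * y) ^ 2 - ε * exp (-(b ^ 2 / 2)) *
        (sinh (b * y) ^ 2 * cosh (b * y)) = (2 - evidence ε b y) * sinh (b * y) ^ 2 := by
      unfold evidence; ring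
    rw [hkey, le_div_iff₀ hD]
    nlinarith [sq_nonneg (1 - evidence ε b y), sq_nonneg (sinh (b * y))]
  rw [integral_sub ((integrable_sinh_sq_gaussianReal b).const_mul _)
    ((integrable_sinh_sq_mul_cosh_gaussianReal b).const_mul _), integral_const_mul,
    integral_const_mul, integral_sinh_sq_gaussianReal,
    integral_sinh_sq_mul_cosh_gaussianReal] at hJ
  calc lowerEnvelope ε (b ^ 2) = exp (-b ^ 2) * ((1 + ε) * ((exp (2 * b ^ 2) - 1) / 2) -
      ε * exp (-(b ^ 2 / 2)) * ((exp (9 * b ^ 2 / 2) - exp (b ^ 2 / 2)) / 4)) := by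
        have h1 : exp (-b ^ 2) * exp (2 * b ^ 2) = exp (b ^ 2) := by rw [← exp_add]; ring_nf
        have h2 : exp (-b ^ 2) * exp (-(b ^ 2 / 2)) * exp (9 * b ^ 2 / 2) = exp (3 * b ^ 2) := by
          rw [← exp_add, ← exp_add]; ring_nf
        have h3 : exp (-b ^ 2) * exp (-(b ^ 2 / 2)) * exp (b ^ 2 / 2) = exp (-b ^ 2) := by
          rw [← exp_add, ← exp_add]; ring_nf
        rw [lowerEnvelope, sinh_eq]
        linear_combination -(1 + ε) / 2 * h1 + ε / 4 * h2 - ε / 4 * h3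
    _ ≤ _ := by gcongr

theorem upperEnvelope_sub_self_le (hε0 : 0 ≤ ε) (hε1 : ε ≤ 1) {t : ℝ} (ht0 : 0 ≤ t)
    (ht : t ≤ 1 / 3) : upperEnvelope ε t - t ≤ 3 * t ^ 2 := by
  have hd : 1 - t / 2 ≤ 1 - ε + ε * exp (-(t / 2)) := by
    nlinarith [add_one_le_exp (-(t / 2))]
  have hsinh : sinh t ≤ t + t ^ 2 := by
    rw [sinh_eq]
    nlinarith [exp_le_one_add_add_sq (x := t) (by rw [abs_le]; constructor <;> linarith),
      add_one_le_exp (-t)]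
  rw [upperEnvelope, sub_le_iff_le_add, div_le_iff₀ (by linarith)]
  nlinarith [mul_le_mul_of_nonneg_left hd (by positivity : 0 ≤ 3 * t ^ 2 + t)]

theorem self_sub_le_lowerEnvelope (hε0 : 0 ≤ ε) (hε1 : ε ≤ 1) {t : ℝ} (ht0 : 0 ≤ t)
    (ht : t ≤ 1 / 3) : t - 3 * t ^ 2 ≤ lowerEnvelope ε t := by
  have h3 := exp_le_one_add_add_sq (x := 3 * t) (by rw [abs_le]; constructor <;> linarith)
  rw [lowerEnvelope]
  nlinarith [self_le_sinh_iff.2 ht0, add_one_le_exp (-t)]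

theorem isBigO_sub_of_envelopes (hε0 : 0 ≤ ε) (hε1 : ε ≤ 1) {k c : ℝ} (hk : 0 ≤ k) (hc : 0 ≤ c)
    {W : ℝ → ℝ} (hlow : ∀ q, 0 ≤ q → k * lowerEnvelope ε (c * q) ≤ W q)
    (hup : ∀ q, 0 ≤ q → W q ≤ k * upperEnvelope ε (c * q)) :
    (fun q ↦ W q - k * c * q) =O[nhdsWithin 0 (Set.Ici 0)] fun q ↦ q ^ 2 := by
  refine IsBigO.of_bound (3 * k * c ^ 2) ?_
  filter_upwards [Icc_mem_nhdsGE (by positivity : (0 : ℝ) < 1 / (3 * c + 1))] with q ⟨hq0, hq⟩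
  have ht : c * q ≤ 1 / 3 := by
    rw [le_div_iff₀ (by positivity)] at hq; linarith
  have hu := mul_le_mul_of_nonneg_left
    (upperEnvelope_sub_self_le hε0 hε1 (by positivity) ht) hk
  have hl := mul_le_mul_of_nonneg_left
    (self_sub_le_lowerEnvelope hε0 hε1 (by positivity) ht) hk
  rw [Real.norm_eq_abs, Real.norm_eq_abs, abs_of_nonneg (sq_nonneg q), abs_le]
  constructor <;> nlinarith [hlow q hq0, hup q hq0]

end Envelopes

end ThreePointPrior

open ThreePointPrior

theorem stmt_19_general {Ω : Type*} [MeasureSpace Ω] [IsProbabilityMeasure (ℙ : Measure Ω)]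
    (ε mu δ : ℝ) (hε : 0 < ε) (hε1 : ε < 1) (hδ : 0 < δ)
    (Θ G : Ω → ℝ) (hΘmeas : Measurable Θ) (hGmeas : Measurable G)
    (hΘlaw : Measure.map Θ ℙ =
      ENNReal.ofReal (1 - ε) • Measure.dirac (0 : ℝ) +
        ENNReal.ofReal (ε / 2) • Measure.dirac mu +
        ENNReal.ofReal (ε / 2) • Measure.dirac (-mu))
    (hGlaw : Measure.map G ℙ = gaussianReal 0 1)
    (hindep : IndepFun Θ G)
    (V : ℝ → ℝ)
    (hV : ∀ q : ℝ, V q =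
      (∫ ω, (MeasureTheory.condExp
          (MeasurableSpace.comap (fun ω => Real.sqrt (δ * q) * Θ ω + G ω) inferInstance)
          ℙ (fun ω => Real.sqrt δ * Θ ω) ω) ^ 2) / δ) :
    (∀ q : ℝ, 0 ≤ q → V q ≤ (mu ^ 2 * ε ^ 2 / (1 - ε)) * Real.sinh (δ * q * mu ^ 2)) ∧
      (fun q => V q - mu ^ 4 * ε ^ 2 * δ * q) =O[nhdsWithin 0 (Set.Ici 0)]
        (fun q => q ^ 2) := by
  have hVeq (q : ℝ) : V q = mu ^ 2 * ε ^ 2 * (exp (-(√(δ * q) * mu) ^ 2) *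
      ∫ y, sinh (√(δ * q) * mu * y) ^ 2 / evidence ε (√(δ * q) * mu) y ∂gaussianReal 0 1) := by
    rw [hV, integral_condExp_sq hε.le hε1 hΘmeas hGmeas hΘlaw hGlaw hindep, sq_sqrt hδ.le]
    field_simp
  have hb {q : ℝ} (hq : 0 ≤ q) : (√(δ * q) * mu) ^ 2 = δ * mu ^ 2 * q := by
    rw [mul_pow, sq_sqrt (by positivity)]; ring
  have hup (q : ℝ) (hq : 0 ≤ q) : V q ≤ mu ^ 2 * ε ^ 2 * upperEnvelope ε (δ * mu ^ 2 * q) := by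
    rw [hVeq, ← hb hq]
    gcongr
    exact integral_sinh_sq_div_evidence_le hε.le hε1 _
  have hlow (q : ℝ) (hq : 0 ≤ q) : mu ^ 2 * ε ^ 2 * lowerEnvelope ε (δ * mu ^ 2 * q) ≤ V q := by
    rw [hVeq, ← hb hq]
    gcongr
    exact lowerEnvelope_le_integral_sinh_sq_div_evidence hε.le hε1 _
  refine ⟨fun q hq ↦ ?_, ?_⟩
  · calc V q ≤ mu ^ 2 * ε ^ 2 * (sinh (δ * mu ^ 2 * q) / (1 - ε)) :=
          (hup q hq).trans (by gcongr; exact upperEnvelope_le hε.le hε1 (by positivity))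
      _ = _ := by ring_nf
  · convert isBigO_sub_of_envelopes hε.le hε1.le (by positivity) (by positivity) hlow hup
      using 2
    ring

/-- For the symmetric three-point prior (values `±μ` with probability `ε/2` each, `0`
with probability `1-ε`) and `G ∼ N(0,1)` independent, the normalized second moment of
the posterior mean `V_±(q) = E[E[√δ·Θ₀ | √(δq)·Θ₀ + G]²]/δ` satisfies
`V_±(q) ≤ (μ²ε²/(1-ε))·sinh(δqμ²)` and `V_±(q) = μ⁴ε²δ·q + O(q²)` as `q → 0⁺`. -/
theorem stmt_19 {Ω : Type*} [MeasureSpace Ω] [IsProbabilityMeasure (ℙ : Measure Ω)]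
    (ε mu δ : ℝ) (hε : 0 < ε) (hε1 : ε < 1) (hmu : 0 < mu) (hδ : 0 < δ)
    (Θ G : Ω → ℝ) (hΘmeas : Measurable Θ) (hGmeas : Measurable G)
    (hΘlaw : Measure.map Θ ℙ =
      ENNReal.ofReal (1 - ε) • Measure.dirac (0 : ℝ) +
        ENNReal.ofReal (ε / 2) • Measure.dirac mu +
        ENNReal.ofReal (ε / 2) • Measure.dirac (-mu))
    (hGlaw : Measure.map G ℙ = gaussianReal 0 1)
    (hindep : IndepFun Θ G)
    (V : ℝ → ℝ)
    (hV : ∀ q : ℝ, V q =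
      (∫ ω, (MeasureTheory.condExp
          (MeasurableSpace.comap (fun ω => Real.sqrt (δ * q) * Θ ω + G ω) inferInstance)
          ℙ (fun ω => Real.sqrt δ * Θ ω) ω) ^ 2) / δ) :
    (∀ q : ℝ, 0 ≤ q → V q ≤ (mu ^ 2 * ε ^ 2 / (1 - ε)) * Real.sinh (δ * q * mu ^ 2)) ∧
      (fun q => V q - mu ^ 4 * ε ^ 2 * δ * q) =O[nhdsWithin 0 (Set.Ici 0)]
        (fun q => q ^ 2) :=
  stmt_19_general ε mu δ hε hε1 hδ Θ G hΘmeas hGmeas hΘlaw hGlaw hindep V hV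
end
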